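/- arXiv:1810.07837 — 6 statements merged into one kernel-verified Lean document; each statement's English description precedes it below -/
import Mathlib

section
/- Let A : ℝⁿ → ℝⁿ be a C¹ vector field admitting a global flow F. Let x ∈ ℝⁿ with A x ≠ 0, and suppose F t x converges to some point p ∈ ℝⁿ as t → ∞. Then for every continuous function φ : ℝⁿ → ℝ there exists c ∈ ℝ such that (∫_0^T φ(F t x)·‖A(F t x)‖ dt) / (∫_0^T ‖A(F t x)‖ dt) tends to c as T → ∞. (The case of Proposition 2.3's trichotomy in which the ω-limit set of x is a single singular point: forward length averages exist.) -/
/-!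
The length average is the average of `f = φ ∘ F(·, x)` against the weight `g = ‖A ∘ F(·, x)‖ ≥ 0`,
and `f` has the limit `φ p`. If the arclength `∫₀ᵀ g` diverges, the average tends to `φ p`, since
the part of the orbit before any fixed time becomes negligible. If the arclength converges, its
limit is positive because `g 0 = ‖A x‖ > 0`, `g` is integrable on `(0, ∞)` and so is `f g` since
`f` is bounded; numerator and denominator then converge separately.
-/

open Filter Topology MeasureTheory Set Asymptotics

section WeightedAverage

variable {f g : ℝ → ℝ} {ℓ a : ℝ}

lemma monotone_intervalIntegral_of_nonneg (hg : Continuous g) (hg0 : ∀ t, 0 ≤ g t) (a : ℝ) :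
    Monotone fun T => ∫ t in a..T, g t := fun S T hST => by
  have hST' : 0 ≤ ∫ t in S..T, g t := intervalIntegral.integral_nonneg hST fun t _ => hg0 t
  rw [← intervalIntegral.integral_interval_sub_left (hg.intervalIntegrable a T)
    (hg.intervalIntegrable a S)] at hST'
  exact sub_nonneg.1 hST'

lemma exists_intervalIntegral_pos_of_pos (hg : Continuous g) (hga : 0 < g a) :
    ∃ T, 0 < ∫ t in a..T, g t := by
  have hpos : ∀ᶠ t in 𝓝[>] a, 0 < g t :=
    nhdsWithin_le_nhds (hg.continuousAt.eventually (lt_mem_nhds hga))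
  obtain ⟨T, hT, hT_sub⟩ := mem_nhdsGT_iff_exists_Ioo_subset.1 hpos
  exact ⟨T, intervalIntegral.intervalIntegral_pos_of_pos_on (hg.intervalIntegrable a T) hT_sub hT⟩

lemma isBounded_image_Ici_of_tendsto (hf : Continuous f) (hfl : Tendsto f atTop (𝓝 ℓ))
    (a : ℝ) : Bornology.IsBounded (f '' Ici a) := by
  obtain ⟨s, hs, hs_bdd⟩ := Metric.exists_isBounded_image_of_tendsto hfl
  obtain ⟨T, hT⟩ := mem_atTop_sets.1 hs
  refine (((isCompact_Icc (a := a) (b := T)).image hf).isBounded.union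
    (hs_bdd.subset (image_mono (s := Ici T) fun t ht => hT t ht))).subset ?_
  rw [← image_union]
  exact image_mono fun t ht => (le_total t T).imp (fun h => ⟨ht, h⟩) id

lemma isLittleO_intervalIntegral_mul_of_tendsto_zero (hf : Continuous f) (hg : Continuous g)
    (hg0 : ∀ t, 0 ≤ g t) (hf0 : Tendsto f atTop (𝓝 0))
    (hG : Tendsto (fun T => ∫ t in a..T, g t) atTop atTop) :
    (fun T => ∫ t in a..T, f t * g t) =o[atTop] fun T => ∫ t in a..T, g t := by
  set G : ℝ → ℝ := fun T => ∫ t in a..T, g t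
  have hfg : Continuous fun t => f t * g t := hf.mul hg
  refine isLittleO_iff.2 fun ε hε => ?_
  have hsmall : ∀ᶠ t in atTop, ‖f t‖ ≤ ε / 2 :=
    (tendsto_zero_iff_norm_tendsto_zero.1 hf0).eventually (eventually_le_nhds (by positivity))
  obtain ⟨T₀, hT₀⟩ := ((eventually_ge_atTop a).and hsmall).exists_forall_of_atTop
  set C := ‖∫ t in a..T₀, f t * g t‖
  filter_upwards [eventually_ge_atTop T₀, hG.eventually_ge_atTop (2 * C / ε)] with T hT hGT
  have hG₀ : 0 ≤ G T₀ := intervalIntegral.integral_nonneg (hT₀ T₀ le_rfl).1 fun t _ => hg0 t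
  have htail : ‖∫ t in T₀..T, f t * g t‖ ≤ ε / 2 * (G T - G T₀) := by
    calc ‖∫ t in T₀..T, f t * g t‖ ≤ ∫ t in T₀..T, ε / 2 * g t := by
          refine intervalIntegral.norm_integral_le_of_norm_le hT (ae_of_all _ fun t ht => ?_)
            ((hg.const_mul _).intervalIntegrable _ _)
          rw [norm_mul, Real.norm_of_nonneg (hg0 t)]
          exact mul_le_mul_of_nonneg_right (hT₀ t ht.1.le).2 (hg0 t)
      _ = ε / 2 * (G T - G T₀) := by
          rw [intervalIntegral.integral_const_mul, intervalIntegral.integral_interval_sub_left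
            (hg.intervalIntegrable _ _) (hg.intervalIntegrable _ _)]
  have hGT' : C ≤ ε / 2 * G T := by
    rw [div_le_iff₀' hε] at hGT
    linarith
  calc ‖∫ t in a..T, f t * g t‖
      = ‖(∫ t in a..T₀, f t * g t) + ∫ t in T₀..T, f t * g t‖ := by
        rw [intervalIntegral.integral_add_adjacent_intervals (hfg.intervalIntegrable _ _)
          (hfg.intervalIntegrable _ _)]
    _ ≤ C + ε / 2 * (G T - G T₀) := (norm_add_le _ _).trans (add_le_add_right htail _)
    _ ≤ ε * ‖G T‖ := by
        rw [Real.norm_of_nonneg (hG₀.trans (monotone_intervalIntegral_of_nonneg hg hg0 a hT))]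
        nlinarith

lemma tendsto_intervalIntegral_mul_div_of_tendsto_atTop (hf : Continuous f) (hg : Continuous g)
    (hg0 : ∀ t, 0 ≤ g t) (hfl : Tendsto f atTop (𝓝 ℓ))
    (hG : Tendsto (fun T => ∫ t in a..T, g t) atTop atTop) :
    Tendsto (fun T => (∫ t in a..T, f t * g t) / ∫ t in a..T, g t) atTop (𝓝 ℓ) := by
  have hsub : Tendsto (fun t => f t - ℓ) atTop (𝓝 0) := by simpa using hfl.sub_const ℓ
  have herr := (isLittleO_intervalIntegral_mul_of_tendsto_zero (f := fun t => f t - ℓ)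
    (hf.sub continuous_const) hg hg0 hsub hG).tendsto_div_nhds_zero.const_add ℓ
  rw [add_zero] at herr
  refine herr.congr' ?_
  filter_upwards [hG.eventually_gt_atTop 0] with T hT
  have hsplit :
      ∫ t in a..T, (f t - ℓ) * g t = (∫ t in a..T, f t * g t) - ℓ * ∫ t in a..T, g t := by
    have hfg : Continuous fun t => f t * g t := hf.mul hg
    rw [← intervalIntegral.integral_const_mul, ← intervalIntegral.integral_sub
      (hfg.intervalIntegrable a T) ((hg.const_mul ℓ).intervalIntegrable a T)]
    simp only [sub_mul]
  rw [hsplit]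
  field_simp
  ring

lemma tendsto_intervalIntegral_mul_of_integrableOn (hf : Continuous f)
    (hfl : Tendsto f atTop (𝓝 ℓ)) (hgi : IntegrableOn g (Ioi a)) :
    Tendsto (fun T => ∫ t in a..T, f t * g t) atTop (𝓝 (∫ t in Ioi a, f t * g t)) := by
  obtain ⟨C, hC⟩ := (isBounded_image_Ici_of_tendsto hf hfl a).exists_norm_le
  have hfgi : IntegrableOn (fun t => f t * g t) (Ioi a) :=
    hgi.bdd_mul hf.aestronglyMeasurable (ae_restrict_of_forall_mem measurableSet_Ioi
      fun t ht => hC _ (mem_image_of_mem f (Ioi_subset_Ici_self ht)))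
  exact intervalIntegral_tendsto_integral_Ioi a hfgi tendsto_id

theorem exists_tendsto_intervalIntegral_mul_div (hf : Continuous f) (hg : Continuous g)
    (hg0 : ∀ t, 0 ≤ g t) (hga : 0 < g a) (hfl : Tendsto f atTop (𝓝 ℓ)) :
    ∃ c, Tendsto (fun T => (∫ t in a..T, f t * g t) / ∫ t in a..T, g t) atTop (𝓝 c) := by
  have hG_mono := monotone_intervalIntegral_of_nonneg hg hg0 a
  rcases tendsto_atTop_of_monotone hG_mono with hG | ⟨L, hL⟩
  · exact ⟨ℓ, tendsto_intervalIntegral_mul_div_of_tendsto_atTop hf hg hg0 hfl hG⟩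
  · have hgi : IntegrableOn g (Ioi a) :=
      integrableOn_Ioi_of_intervalIntegral_norm_tendsto L a (fun _ => hg.integrableOn_Ioc)
        tendsto_id (by simpa only [id, Real.norm_of_nonneg (hg0 _)] using hL)
    obtain ⟨T, hT⟩ := exists_intervalIntegral_pos_of_pos hg hga
    have hL0 : 0 < L := hT.trans_le (hG_mono.ge_of_tendsto hL T)
    exact ⟨_, (tendsto_intervalIntegral_mul_of_integrableOn hf hfl hgi).div hL hL0.ne'⟩

end WeightedAverage

theorem length_average_exists_of_tendsto_singularity_general
    (n : ℕ)
    (A : EuclideanSpace ℝ (Fin n) → EuclideanSpace ℝ (Fin n))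
    (hA : ContDiff ℝ 1 A)
    (F : ℝ → EuclideanSpace ℝ (Fin n) → EuclideanSpace ℝ (Fin n))
    (hF0 : ∀ y, F 0 y = y)
    (hFderiv : ∀ y, ∀ t : ℝ, HasDerivAt (fun τ => F τ y) (A (F t y)) t)
    (x : EuclideanSpace ℝ (Fin n))
    (hx : A x ≠ 0)
    (p : EuclideanSpace ℝ (Fin n))
    (hconv : Tendsto (fun t : ℝ => F t x) atTop (𝓝 p)) :
    ∀ φ : EuclideanSpace ℝ (Fin n) → ℝ, Continuous φ →
      ∃ c : ℝ, Tendsto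
        (fun T : ℝ => (∫ t in (0:ℝ)..T, φ (F t x) * ‖A (F t x)‖) /
                      (∫ t in (0:ℝ)..T, ‖A (F t x)‖))
        atTop (𝓝 c) := by
  intro φ hφ
  have horbit : Continuous fun t => F t x :=
    continuous_iff_continuousAt.2 fun t => (hFderiv x t).continuousAt
  have hspeed : 0 < ‖A (F 0 x)‖ := by rwa [hF0, norm_pos_iff]
  exact exists_tendsto_intervalIntegral_mul_div (hφ.comp horbit) (hA.continuous.comp horbit).norm
    (fun _ => norm_nonneg _) hspeed ((hφ.tendsto p).comp hconv)

/-- Proposition 2.3, singular-point case: if the forward orbit of `x` converges to a point,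
then the forward length average of every continuous function exists at `x`. -/
theorem length_average_exists_of_tendsto_singularity
    (n : ℕ)
    (A : EuclideanSpace ℝ (Fin n) → EuclideanSpace ℝ (Fin n))
    (hA : ContDiff ℝ 1 A)
    (F : ℝ → EuclideanSpace ℝ (Fin n) → EuclideanSpace ℝ (Fin n))
    (hF0 : ∀ y, F 0 y = y)
    (hFadd : ∀ s t : ℝ, ∀ y, F (s + t) y = F s (F t y))
    (hFderiv : ∀ y, ∀ t : ℝ, HasDerivAt (fun τ => F τ y) (A (F t y)) t)
    (x : EuclideanSpace ℝ (Fin n))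
    (hx : A x ≠ 0)
    (p : EuclideanSpace ℝ (Fin n))
    (hconv : Tendsto (fun t : ℝ => F t x) atTop (𝓝 p)) :
    ∀ φ : EuclideanSpace ℝ (Fin n) → ℝ, Continuous φ →
      ∃ c : ℝ, Tendsto
        (fun T : ℝ => (∫ t in (0:ℝ)..T, φ (F t x) * ‖A (F t x)‖) /
                      (∫ t in (0:ℝ)..T, ‖A (F t x)‖))
        atTop (𝓝 c) :=
  length_average_exists_of_tendsto_singularity_general n A hA F hF0 hFderiv x hx p hconv
end

section
/- Let A : ℝ² → ℝ² be a C¹ vector field admitting a global flow F. Let p ∈ ℝ² and T₀ > 0 satisfy F T₀ p = p and A p ≠ 0, and let γ = {F t p : t ∈ ℝ} be the corresponding periodic orbit. Let x ∈ ℝ² be a point whose ω-limit set ⋂_{s ≥ 0} closure{F t x : t ≥ s} equals γ. Then for every continuous function φ : ℝ² → ℝ, the ratio (∫_0^T φ(F t x)·‖A(F t x)‖ dt) / (∫_0^T ‖A(F t x)‖ dt) converges, as T → ∞, to (∫_0^{T₀} φ(F t p)·‖A(F t p)‖ dt) / (∫_0^{T₀} ‖A(F t p)‖ dt). (Proposition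 2.3, periodic-orbit case: the forward length average of any continuous function exists and equals the arclength average of φ over the limit cycle.) -/
open Filter Topology MeasureTheory Set intervalIntegral

set_option maxHeartbeats 1000000

lemma avg_tendsto_of_lap {h : ℝ → ℝ} (hc : Continuous h) {T₀ I M t₀ : ℝ} (hT₀ : 0 < T₀)
    (hM : ∀ u ≥ t₀, |h u| ≤ M)
    (lap : ∀ ε > 0, ∃ t₁ ≥ t₀, ∀ t ≥ t₁, |(∫ τ in t..(t + T₀), h τ) - I| ≤ ε) :
    Tendsto (fun T => (∫ τ in (0:ℝ)..T, h τ) / T) atTop (𝓝 (I / T₀)) := by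
  have hint : ∀ a b : ℝ, IntervalIntegrable h volume a b := fun a b => hc.intervalIntegrable a b
  have hM0 : 0 ≤ M := le_trans (abs_nonneg _) (hM t₀ le_rfl)
  rw [Metric.tendsto_atTop]
  intro ε hε
  obtain ⟨t₁', ht₁'t₀, hlap⟩ := lap (ε * T₀ / 4) (by positivity)
  set t₁ : ℝ := max t₁' 0 with ht₁def
  have ht₁0 : 0 ≤ t₁ := le_max_right _ _
  have hlap' : ∀ t ≥ t₁, |(∫ τ in t..(t + T₀), h τ) - I| ≤ ε * T₀ / 4 :=
    fun t ht => hlap t (le_trans (le_max_left _ _) ht)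
  have ht₁t₀ : t₀ ≤ t₁ := le_trans ht₁'t₀ (le_max_left _ _)
  clear_value t₁
  set C : ℝ := |∫ τ in (0:ℝ)..t₁, h τ| + M * T₀ + (t₁ + T₀) / T₀ * |I| with hCdef
  have hC0 : 0 ≤ C := by positivity
  clear_value C
  refine ⟨max (max t₁ 1) (2 * C / ε + 1), fun T hT => ?_⟩
  have hTt₁ : t₁ ≤ T := le_trans (le_max_of_le_left (le_max_left _ _)) hT
  have hT1 : (1:ℝ) ≤ T := le_trans (le_max_of_le_left (le_max_right _ _)) hT
  have hT0 : (0:ℝ) < T := lt_of_lt_of_le one_pos hT1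
  have hTC : 2 * C / ε + 1 ≤ T := le_trans (le_max_right _ _) hT
  set n : ℕ := ⌊(T - t₁) / T₀⌋₊ with hndef
  have hfr : ((n:ℝ)) ≤ (T - t₁) / T₀ := Nat.floor_le (div_nonneg (by linarith) hT₀.le)
  have hfr' : (T - t₁) / T₀ < n + 1 := Nat.lt_floor_add_one _
  clear_value n
  have hn1 : t₁ + n * T₀ ≤ T := by
    have := (le_div_iff₀ hT₀).mp hfr; linarith
  have hn2 : T < t₁ + (n + 1) * T₀ := by
    have := (div_lt_iff₀ hT₀).mp hfr'; linarith
  -- decompose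
  have hsplit : (∫ τ in (0:ℝ)..T, h τ) =
      (∫ τ in (0:ℝ)..t₁, h τ) + (∫ τ in t₁..(t₁ + n * T₀), h τ)
        + ∫ τ in (t₁ + n * T₀)..T, h τ := by
    rw [integral_add_adjacent_intervals (hint _ _) (hint _ _),
      integral_add_adjacent_intervals (hint _ _) (hint _ _)]
  have hsum : (∫ τ in t₁..(t₁ + n * T₀), h τ) =
      ∑ k ∈ Finset.range n, ∫ τ in (t₁ + k * T₀)..(t₁ + (k+1) * T₀), h τ := by
    have := intervalIntegral.sum_integral_adjacent_intervals
      (a := fun k : ℕ => t₁ + k * T₀) (n := n) (f := h) (μ := volume)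
      (fun k _ => hint _ _)
    simpa using this.symm
  have hsumest : |(∫ τ in t₁..(t₁ + n * T₀), h τ) - n * I| ≤ n * (ε * T₀ / 4) := by
    rw [hsum]
    have : (n:ℝ) * I = ∑ _k ∈ Finset.range n, I := by simp
    rw [this, ← Finset.sum_sub_distrib]
    refine le_trans (Finset.abs_sum_le_sum_abs _ _) ?_
    have : (n:ℝ) * (ε * T₀ / 4) = ∑ _k ∈ Finset.range n, (ε * T₀ / 4) := by simp
    rw [this]
    refine Finset.sum_le_sum fun k _ => ?_
    have hk : t₁ + k * T₀ ≥ t₁ := by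
      have : (0:ℝ) ≤ k * T₀ := by positivity
      linarith
    have := hlap' (t₁ + k * T₀) hk
    have heq : t₁ + (k+1) * T₀ = (t₁ + k * T₀) + T₀ := by push_cast; ring
    rw [heq]
    exact this
  have htail : |∫ τ in (t₁ + n * T₀)..T, h τ| ≤ M * T₀ := by
    have hb : ∀ u ∈ Set.uIoc (t₁ + n * T₀) T, ‖h u‖ ≤ M := by
      intro u hu
      rw [Set.uIoc_of_le hn1] at hu
      refine hM u (le_trans ht₁t₀ ?_)
      have : (0:ℝ) ≤ n * T₀ := by positivity
      linarith [hu.1]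
    have := intervalIntegral.norm_integral_le_of_norm_le_const hb
    rw [Real.norm_eq_abs] at this
    refine le_trans this ?_
    have : |T - (t₁ + n * T₀)| ≤ T₀ := by
      rw [abs_of_nonneg (by linarith)]; linarith
    nlinarith
  have hphase : |(n:ℝ) * I - T / T₀ * I| ≤ (t₁ + T₀) / T₀ * |I| := by
    have : (n:ℝ) * I - T / T₀ * I = ((n * T₀ - T) / T₀) * I := by field_simp
    rw [this, abs_mul]
    gcongr
    rw [abs_div, abs_of_pos hT₀, div_le_div_iff_of_pos_right hT₀, abs_of_nonpos (by linarith)]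
    linarith
  have hmain : |(∫ τ in (0:ℝ)..T, h τ) - T / T₀ * I| ≤ C + T / T₀ * (ε * T₀ / 4) := by
    rw [hsplit]
    have hnT : (n:ℝ) * (ε * T₀ / 4) ≤ T / T₀ * (ε * T₀ / 4) := by
      have hle : (n:ℝ) ≤ T / T₀ := le_trans hfr (by gcongr; linarith)
      nlinarith [mul_pos (mul_pos hε hT₀) (by norm_num : (0:ℝ) < 4)]
    calc |(∫ τ in (0:ℝ)..t₁, h τ) + (∫ τ in t₁..(t₁ + n * T₀), h τ)
            + (∫ τ in (t₁ + n * T₀)..T, h τ) - T / T₀ * I|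
        = |(∫ τ in (0:ℝ)..t₁, h τ) + ((∫ τ in t₁..(t₁ + n * T₀), h τ) - n * I)
            + (∫ τ in (t₁ + n * T₀)..T, h τ) + ((n:ℝ) * I - T / T₀ * I)| := by ring_nf
      _ ≤ |(∫ τ in (0:ℝ)..t₁, h τ)| + |(∫ τ in t₁..(t₁ + n * T₀), h τ) - n * I|
            + |∫ τ in (t₁ + n * T₀)..T, h τ| + |(n:ℝ) * I - T / T₀ * I| := by
          calc |(∫ τ in (0:ℝ)..t₁, h τ) + ((∫ τ in t₁..(t₁ + n * T₀), h τ) - n * I)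
                + (∫ τ in (t₁ + n * T₀)..T, h τ) + ((n:ℝ) * I - T / T₀ * I)|
              ≤ |(∫ τ in (0:ℝ)..t₁, h τ) + ((∫ τ in t₁..(t₁ + n * T₀), h τ) - n * I)
                + (∫ τ in (t₁ + n * T₀)..T, h τ)| + |(n:ℝ) * I - T / T₀ * I| := abs_add_le _ _
            _ ≤ |(∫ τ in (0:ℝ)..t₁, h τ) + ((∫ τ in t₁..(t₁ + n * T₀), h τ) - n * I)|
                + |(∫ τ in (t₁ + n * T₀)..T, h τ)| + |(n:ℝ) * I - T / T₀ * I| := by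
                  gcongr; exact abs_add_le _ _
            _ ≤ _ := by gcongr; exact abs_add_le _ _
      _ ≤ |(∫ τ in (0:ℝ)..t₁, h τ)| + n * (ε * T₀ / 4) + M * T₀ + (t₁ + T₀) / T₀ * |I| := by
          gcongr
      _ ≤ C + T / T₀ * (ε * T₀ / 4) := by rw [hCdef]; linarith
  rw [Real.dist_eq]
  have : (∫ τ in (0:ℝ)..T, h τ) / T - I / T₀ = ((∫ τ in (0:ℝ)..T, h τ) - T / T₀ * I) / T := by
    field_simp
  rw [this, abs_div, abs_of_pos hT0]
  rw [div_lt_iff₀ hT0]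
  have hCT : C ≤ ε / 2 * T := by
    have h2C : 2 * C / ε ≤ T := by linarith
    have := (div_le_iff₀ hε).mp h2C
    nlinarith
  calc |(∫ τ in (0:ℝ)..T, h τ) - T / T₀ * I| ≤ C + T / T₀ * (ε * T₀ / 4) := hmain
    _ = C + T * ε / 4 := by field_simp
    _ ≤ ε / 2 * T + T * ε / 4 := by linarith
    _ < ε * T := by nlinarith

set_option maxHeartbeats 1600000

/-- Proposition 2.3, periodic-orbit case: if the ω-limit set of `x` is a periodic orbit `γ`,
then the forward length average of any continuous function exists at `x` and equals the
arclength average of the function over the limit cycle. -/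
theorem length_average_along_orbit_attracted_to_periodic_orbit
    (A : EuclideanSpace ℝ (Fin 2) → EuclideanSpace ℝ (Fin 2))
    (hA : ContDiff ℝ 1 A)
    (F : ℝ → EuclideanSpace ℝ (Fin 2) → EuclideanSpace ℝ (Fin 2))
    (hF0 : ∀ y, F 0 y = y)
    (hFadd : ∀ s t : ℝ, ∀ y, F (s + t) y = F s (F t y))
    (hFderiv : ∀ y, ∀ t : ℝ, HasDerivAt (fun τ => F τ y) (A (F t y)) t)
    (p : EuclideanSpace ℝ (Fin 2)) (T₀ : ℝ)
    (hT₀ : 0 < T₀) (hper : F T₀ p = p) (hAp : A p ≠ 0)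
    (x : EuclideanSpace ℝ (Fin 2))
    (homega : (⋂ s ∈ Set.Ici (0:ℝ), closure ((fun t => F t x) '' Set.Ici s)) =
      Set.range (fun t : ℝ => F t p)) :
    ∀ φ : EuclideanSpace ℝ (Fin 2) → ℝ, Continuous φ →
      Tendsto
        (fun T : ℝ => (∫ t in (0:ℝ)..T, φ (F t x) * ‖A (F t x)‖) /
                      (∫ t in (0:ℝ)..T, ‖A (F t x)‖))
        atTop
        (𝓝 ((∫ t in (0:ℝ)..T₀, φ (F t p) * ‖A (F t p)‖) /
            (∫ t in (0:ℝ)..T₀, ‖A (F t p)‖))) := by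
  intro φ hφ
  have hAc : Continuous A := hA.continuous
  have hFc : ∀ y, Continuous (fun t : ℝ => F t y) := fun y =>
    continuous_iff_continuousAt.2 fun t => (hFderiv y t).continuousAt
  have Per : Function.Periodic (fun t : ℝ => F t p) T₀ := fun t => by
    show F (t + T₀) p = F t p
    rw [hFadd t T₀ p, hper]
  set γ : Set (EuclideanSpace ℝ (Fin 2)) := Set.range (fun t : ℝ => F t p) with hγdef
  have hpγ : p ∈ γ := ⟨0, hF0 p⟩
  have hγne : γ.Nonempty := ⟨p, hpγ⟩
  have hγc : IsCompact γ := by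
    have him : (fun t : ℝ => F t p) '' Set.Icc 0 (0 + T₀) = Set.range (fun t : ℝ => F t p) :=
      Per.image_Icc hT₀ 0
    rw [hγdef, ← him]
    exact isCompact_Icc.image (hFc p)
  have hflow : ∀ (y : EuclideanSpace ℝ (Fin 2)) (c τ : ℝ),
      HasDerivAt (fun u : ℝ => F (c + u) y) (A (F (c + τ) y)) τ := by
    intro y c τ
    have heq : (fun u : ℝ => F (c + u) y) = fun u : ℝ => F u (F c y) := by
      funext u; rw [add_comm, hFadd]
    have hval : F (c + τ) y = F τ (F c y) := by rw [add_comm, hFadd]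
    rw [heq, hval]
    exact hFderiv (F c y) τ
  have hpcl : ∀ s : ℝ, 0 ≤ s → p ∈ closure ((fun t => F t x) '' Set.Ici s) := by
    intro s hs
    have hp' : p ∈ (⋂ s ∈ Set.Ici (0:ℝ), closure ((fun t => F t x) '' Set.Ici s)) := by
      rw [homega]; exact hpγ
    exact Set.mem_iInter₂.1 hp' s hs
  -- the distance from the orbit of x to γ tends to 0
  have hdist : Tendsto (fun t => Metric.infDist (F t x) γ) atTop (𝓝 0) := by
    have hdc : Continuous (fun t => Metric.infDist (F t x) γ) :=
      (Metric.continuous_infDist_pt γ).comp (hFc x)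
    by_contra hcon
    rw [Metric.tendsto_atTop] at hcon
    push_neg at hcon
    obtain ⟨ε, hε, hfreq⟩ := hcon
    have hseq : ∀ n : ℕ, ∃ t : ℝ, (n : ℝ) ≤ t ∧ Metric.infDist (F t x) γ = ε := by
      intro n
      obtain ⟨b, hb, hbe⟩ := hfreq (n : ℝ)
      have hbe' : ε ≤ Metric.infDist (F b x) γ := by
        rw [Real.dist_eq, sub_zero, abs_of_nonneg Metric.infDist_nonneg] at hbe
        exact hbe
      obtain ⟨y, hy, hydist⟩ := Metric.mem_closure_iff.1 (hpcl (max b 0) (le_max_right _ _)) ε hε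
      obtain ⟨a, ha, rfl⟩ := hy
      have hab : b ≤ a := le_trans (le_max_left _ _) ha
      have hda : Metric.infDist (F a x) γ < ε :=
        lt_of_le_of_lt (Metric.infDist_le_dist_of_mem hpγ) (by rw [dist_comm]; exact hydist)
      have hIVT := intermediate_value_Icc' hab hdc.continuousOn
      have hmem : ε ∈ Set.Icc (Metric.infDist (F a x) γ) (Metric.infDist (F b x) γ) :=
        ⟨hda.le, hbe'⟩
      obtain ⟨u, hu, huε⟩ := hIVT hmem
      exact ⟨u, le_trans hb hu.1, huε⟩
    choose u hu hdu using hseq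
    obtain ⟨r, hr0, hrγ⟩ := hγc.isBounded.subset_closedBall_lt 0 p
    have hyK : ∀ n, F (u n) x ∈ Metric.closedBall p (r + ε) := by
      intro n
      obtain ⟨z, hzγ, hz⟩ := hγc.exists_infDist_eq_dist hγne (F (u n) x)
      have h1 : dist (F (u n) x) z = ε := by rw [← hz, hdu]
      have h2 : dist z p ≤ r := hrγ hzγ
      exact Metric.mem_closedBall.2 (le_trans (dist_triangle _ z p) (by linarith))
    obtain ⟨z, hzK, ψ, hψ, hlim⟩ :=
      (isCompact_closedBall p (r + ε)).tendsto_subseq hyK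
    have hze : Metric.infDist z γ = ε := by
      have h1 : Tendsto (fun k => Metric.infDist (F (u (ψ k)) x) γ) atTop
          (𝓝 (Metric.infDist z γ)) :=
        ((Metric.continuous_infDist_pt γ).tendsto z).comp hlim
      have h2 : (fun k => Metric.infDist (F (u (ψ k)) x) γ) = fun _ => ε := by
        funext k; exact hdu (ψ k)
      rw [h2] at h1
      exact tendsto_nhds_unique h1 tendsto_const_nhds
    have hzω : z ∈ (⋂ s ∈ Set.Ici (0:ℝ), closure ((fun t => F t x) '' Set.Ici s)) := by
      refine Set.mem_iInter₂.2 fun s hs => ?_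
      refine mem_closure_of_tendsto hlim ?_
      rw [eventually_atTop]
      refine ⟨⌈s⌉₊, fun k hk => ?_⟩
      refine ⟨u (ψ k), ?_, rfl⟩
      have h1 : s ≤ (k : ℝ) := le_trans (Nat.le_ceil s) (by exact_mod_cast hk)
      have h2 : (k : ℝ) ≤ (ψ k : ℝ) := by exact_mod_cast hψ.le_apply
      exact Set.mem_Ici.2 (le_trans h1 (le_trans h2 (hu (ψ k))))
    rw [homega] at hzω
    rw [Metric.infDist_zero_of_mem hzω] at hze
    exact hε.ne hze
  -- compact neighborhood B of γ and the Lipschitz constant of A on it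
  obtain ⟨r, hr0, hrγ⟩ := hγc.isBounded.subset_closedBall_lt 0 p
  set B : Set (EuclideanSpace ℝ (Fin 2)) := Metric.closedBall p (r + 1) with hBdef
  have hBc : IsCompact B := isCompact_closedBall _ _
  have hγB : γ ⊆ B := hrγ.trans (Metric.closedBall_subset_closedBall (by linarith))
  have hmemB : ∀ y, Metric.infDist y γ ≤ 1 → y ∈ B := by
    intro y hy
    obtain ⟨z, hzγ, hz⟩ := hγc.exists_infDist_eq_dist hγne y
    have h1 : dist y z ≤ 1 := by rw [← hz]; exact hy
    have h2 : dist z p ≤ r := hrγ hzγ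
    exact Metric.mem_closedBall.2 (le_trans (dist_triangle y z p) (by linarith))
  obtain ⟨Cf, hCf⟩ := hBc.exists_bound_of_continuousOn
    ((hA.continuous_fderiv one_ne_zero).continuousOn)
  set K : NNReal := ‖Cf‖₊ with hKdef
  have hKb : ∀ y ∈ B, ‖fderiv ℝ A y‖₊ ≤ K := by
    intro y hy
    have h1 : ‖fderiv ℝ A y‖ ≤ ‖Cf‖ := (hCf y hy).trans (le_abs_self Cf)
    rwa [← coe_nnnorm, ← coe_nnnorm, NNReal.coe_le_coe] at h1
  have hLip : LipschitzOnWith K A B :=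
    Convex.lipschitzOnWith_of_nnnorm_fderiv_le
      (fun y _ => (hA.differentiable one_ne_zero).differentiableAt) hKb
      (convex_closedBall p (r + 1))
  -- key averaging statement
  have key : ∀ g : EuclideanSpace ℝ (Fin 2) → ℝ, Continuous g →
      Tendsto (fun T : ℝ => (∫ τ in (0:ℝ)..T, g (F τ x)) / T) atTop
        (𝓝 ((∫ τ in (0:ℝ)..T₀, g (F τ p)) / T₀)) := by
    intro g hg
    obtain ⟨M, hMB⟩ := hBc.exists_bound_of_continuousOn hg.continuousOn
    obtain ⟨t₀, ht₀⟩ := eventually_atTop.1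
      (hdist.eventually_lt_const (one_pos : (0:ℝ) < 1))
    refine avg_tendsto_of_lap (h := fun τ => g (F τ x)) (hg.comp (hFc x)) hT₀ (M := M) (t₀ := t₀) ?_ ?_
    · intro v hv
      have := hMB (F v x) (hmemB _ (ht₀ v hv).le)
      simpa [Real.norm_eq_abs] using this
    · intro ε hε
      have hUC := hBc.uniformContinuousOn_of_continuous hg.continuousOn
      rw [Metric.uniformContinuousOn_iff] at hUC
      obtain ⟨δ, hδ0, hδ⟩ := hUC (ε / (T₀ + 1)) (by positivity)
      set δ₂ : ℝ := min ((δ / 2) * Real.exp (-(K * T₀))) 1 with hδ₂def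
      have hδ₂0 : 0 < δ₂ := lt_min (by positivity) one_pos
      obtain ⟨t₁', ht₁'⟩ := eventually_atTop.1 (hdist.eventually_lt_const hδ₂0)
      refine ⟨max t₁' t₀, le_max_right _ _, ?_⟩
      intro t ht
      have htt₁' : ∀ v ≥ t, Metric.infDist (F v x) γ < δ₂ :=
        fun v hv => ht₁' v (le_trans (le_trans (le_max_left _ _) ht) hv)
      obtain ⟨z, hzγ, hz⟩ := hγc.exists_infDist_eq_dist hγne (F t x)
      obtain ⟨s, rfl⟩ := hzγ
      have hinit : dist (F (t + 0) x) (F (s + 0) p) ≤ δ₂ := by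
        simp only [add_zero]
        rw [← hz]
        exact (htt₁' t le_rfl).le
      have hGron : ∀ τ ∈ Set.Icc (0:ℝ) T₀,
          dist (F (t + τ) x) (F (s + τ) p) ≤ δ₂ * Real.exp (K * (τ - 0)) :=
        dist_le_of_trajectories_ODE_of_mem (v := fun _ => A)
          (s := fun _ => B) (K := K) (fun _ _ => hLip)
          (((hFc x).comp (continuous_const.add continuous_id)).continuousOn)
          (fun τ _ => (hflow x t τ).hasDerivWithinAt)
          (fun τ hτ => hmemB _
            (le_trans (htt₁' (t + τ) (le_add_of_nonneg_right hτ.1)).le (min_le_right _ _)))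
          (((hFc p).comp (continuous_const.add continuous_id)).continuousOn)
          (fun τ _ => (hflow p s τ).hasDerivWithinAt)
          (fun τ _ => hγB ⟨s + τ, rfl⟩)
          hinit
      have hclose : ∀ τ ∈ Set.Icc (0:ℝ) T₀, dist (F (t + τ) x) (F (s + τ) p) < δ := by
        intro τ hτ
        refine lt_of_le_of_lt (hGron τ hτ) ?_
        have h1 : δ₂ ≤ (δ / 2) * Real.exp (-(K * T₀)) := min_le_left _ _
        have h2 : Real.exp ((K : ℝ) * (τ - 0)) ≤ Real.exp ((K : ℝ) * T₀) := by
          apply Real.exp_le_exp.2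
          have hK0 : (0:ℝ) ≤ (K : ℝ) := K.coe_nonneg
          rw [sub_zero]
          exact mul_le_mul_of_nonneg_left hτ.2 hK0
        calc δ₂ * Real.exp ((K : ℝ) * (τ - 0))
            ≤ ((δ / 2) * Real.exp (-(K * T₀))) * Real.exp ((K : ℝ) * T₀) :=
              mul_le_mul h1 h2 (Real.exp_pos _).le (by positivity)
          _ = δ / 2 := by
              rw [mul_assoc, ← Real.exp_add, neg_add_cancel, Real.exp_zero, mul_one]
          _ < δ := half_lt_self hδ0
      have hintx : IntervalIntegrable (fun τ => g (F (t + τ) x)) volume 0 T₀ :=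
        ((hg.comp (hFc x)).comp (continuous_const.add continuous_id)).intervalIntegrable _ _
      have hintp : IntervalIntegrable (fun τ => g (F (s + τ) p)) volume 0 T₀ :=
        ((hg.comp (hFc p)).comp (continuous_const.add continuous_id)).intervalIntegrable _ _
      have hix : (∫ τ in t..(t + T₀), g (F τ x)) = ∫ τ in (0:ℝ)..T₀, g (F (t + τ) x) := by
        have h := intervalIntegral.integral_comp_add_left (a := (0:ℝ)) (b := T₀)
          (fun τ => g (F τ x)) t
        simp only [add_zero] at h
        exact h.symm
      have hip : (∫ τ in (0:ℝ)..T₀, g (F τ p)) = ∫ τ in (0:ℝ)..T₀, g (F (s + τ) p) := by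
        have hper' : Function.Periodic (fun τ : ℝ => g (F τ p)) T₀ := Per.comp g
        have h1 := hper'.intervalIntegral_add_eq 0 s
        rw [zero_add] at h1
        have h2 := intervalIntegral.integral_comp_add_left (a := (0:ℝ)) (b := T₀)
          (fun τ => g (F τ p)) s
        simp only [add_zero] at h2
        rw [h1, ← h2]
      rw [hix, hip, ← intervalIntegral.integral_sub hintx hintp]
      have hb : ∀ τ ∈ Set.uIoc (0:ℝ) T₀, ‖g (F (t + τ) x) - g (F (s + τ) p)‖ ≤ ε / (T₀ + 1) := by
        intro τ hτ
        rw [Set.uIoc_of_le hT₀.le] at hτ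
        have hτ' : τ ∈ Set.Icc (0:ℝ) T₀ := ⟨hτ.1.le, hτ.2⟩
        have hdlt := hclose τ hτ'
        have hx_mem : F (t + τ) x ∈ B := hmemB _
          (le_trans (htt₁' (t + τ) (le_add_of_nonneg_right hτ'.1)).le (min_le_right _ _))
        have hp_mem : F (s + τ) p ∈ B := hγB ⟨s + τ, rfl⟩
        have hgd := hδ _ hx_mem _ hp_mem hdlt
        rw [Real.norm_eq_abs, ← Real.dist_eq]
        exact hgd.le
      have hest := intervalIntegral.norm_integral_le_of_norm_le_const hb
      rw [Real.norm_eq_abs] at hest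
      refine le_trans hest ?_
      rw [sub_zero, abs_of_nonneg hT₀.le, div_mul_eq_mul_div, div_le_iff₀ (by linarith)]
      nlinarith
  -- assemble
  have h1 := key (fun y => φ y * ‖A y‖) (hφ.mul hAc.norm)
  have h2 := key (fun y => ‖A y‖) hAc.norm
  have hI₂pos : 0 < ∫ τ in (0:ℝ)..T₀, ‖A (F τ p)‖ := by
    have hApos : 0 < ‖A p‖ := norm_pos_iff.2 hAp
    have hcont0 : ContinuousAt (fun τ : ℝ => ‖A (F τ p)‖) 0 :=
      (hAc.norm.comp (hFc p)).continuousAt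
    have hev : ∀ᶠ τ in 𝓝 (0:ℝ), ‖A p‖ / 2 < ‖A (F τ p)‖ :=
      Filter.Tendsto.eventually_const_lt
        (show ‖A p‖ / 2 < ‖A (F 0 p)‖ by rw [hF0]; linarith) hcont0
    obtain ⟨δ', hδ'0, hδ'⟩ := Metric.eventually_nhds_iff.1 hev
    set d : ℝ := min (δ' / 2) T₀ with hddef
    have hd0 : 0 < d := lt_min (by positivity) hT₀
    have hdT₀ : d ≤ T₀ := min_le_right _ _
    have hint : ∀ a b : ℝ, IntervalIntegrable (fun τ => ‖A (F τ p)‖) volume a b :=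
      fun a b => (hAc.norm.comp (hFc p)).intervalIntegrable a b
    have hstep1 : (‖A p‖ / 2) * d ≤ ∫ τ in (0:ℝ)..d, ‖A (F τ p)‖ := by
      have hconst : (∫ _ in (0:ℝ)..d, (‖A p‖ / 2)) = (‖A p‖ / 2) * d := by
        simp [mul_comm, intervalIntegral.integral_const, smul_eq_mul]
        ring
      rw [← hconst]
      refine intervalIntegral.integral_mono_on hd0.le intervalIntegrable_const (hint 0 d) ?_
      intro τ hτ
      have hdist' : dist τ 0 < δ' := by
        rw [Real.dist_eq, sub_zero, abs_of_nonneg hτ.1]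
        have : τ ≤ δ' / 2 := hτ.2.trans (min_le_left _ _)
        linarith
      exact (hδ' hdist').le
    have hstep2 : (∫ τ in (0:ℝ)..d, ‖A (F τ p)‖) ≤ ∫ τ in (0:ℝ)..T₀, ‖A (F τ p)‖ :=
      intervalIntegral.integral_mono_interval le_rfl hd0.le hdT₀
        (ae_of_all _ fun τ => norm_nonneg _) (hint 0 T₀)
    nlinarith
  have hlim := h1.div h2 (ne_of_gt (div_pos hI₂pos hT₀))
  have hvals : ((∫ τ in (0:ℝ)..T₀, φ (F τ p) * ‖A (F τ p)‖) / T₀) /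
      ((∫ τ in (0:ℝ)..T₀, ‖A (F τ p)‖) / T₀)
      = (∫ τ in (0:ℝ)..T₀, φ (F τ p) * ‖A (F τ p)‖) / (∫ τ in (0:ℝ)..T₀, ‖A (F τ p)‖) := by
    rw [div_div_div_comm, div_self (ne_of_gt hT₀), div_one]
  rw [← hvals]
  refine hlim.congr' ?_
  filter_upwards [eventually_ge_atTop (1:ℝ)] with T hT
  show ((∫ τ in (0:ℝ)..T, φ (F τ x) * ‖A (F τ x)‖) / T) / ((∫ τ in (0:ℝ)..T, ‖A (F τ x)‖) / T)
      = (∫ τ in (0:ℝ)..T, φ (F τ x) * ‖A (F τ x)‖) / (∫ τ in (0:ℝ)..T, ‖A (F τ x)‖)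
  rw [div_div_div_comm, div_self (ne_of_gt (by linarith : (0:ℝ) < T)), div_one]
end

section
/- Let A : ℝ² → ℝ² be a C¹ vector field admitting a global flow F. Let p, v ∈ ℝ² with v ≠ 0, and let Σ = {p + s•v : s ∈ [0,1]} be a segment transverse to A, i.e. for every y ∈ Σ the vectors A y and v are linearly independent. Assume every point of Σ has a finite first return time to Σ: there is T : [0,1] → (0,∞) such that for each s, F (T s) (p + s•v) ∈ Σ and F u (p + s•v) ∉ Σ for all 0 < u < T s. Let s̃ ∈ [0,1] be such that F t (p + s̃•v) ∉ {p, p + v} (the endpoints of Σ) for all 0 < t ≤ T s̃. Then the function s ↦ ∫_0^{T s} ‖A(F t (p + s•v))‖ dt, assigning to each point of Σ the arclength of its first-return orbit segment, is continuous at s̃. (Lemma 2.2.) -/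
open Filter Topology MeasureTheory Metric Set Real

lemma exists_dual_pair {a v : EuclideanSpace ℝ (Fin 2)} (h : LinearIndependent ℝ ![a, v]) :
    ∃ φ ψ : EuclideanSpace ℝ (Fin 2) →L[ℝ] ℝ, φ a = 1 ∧ φ v = 0 ∧ ψ a = 0 ∧ ψ v = 1 ∧
      ∀ w : EuclideanSpace ℝ (Fin 2), w = φ w • a + ψ w • v := by
  have hcard : Fintype.card (Fin 2) = Module.finrank ℝ (EuclideanSpace ℝ (Fin 2)) := by
    simp [finrank_euclideanSpace_fin]
  let b := basisOfLinearIndependentOfCardEqFinrank h hcard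
  have hb : ⇑b = ![a, v] := coe_basisOfLinearIndependentOfCardEqFinrank h hcard
  have hb0 : b 0 = a := by rw [hb]; rfl
  have hb1 : b 1 = v := by rw [hb]; rfl
  refine ⟨LinearMap.toContinuousLinearMap (b.coord 0),
    LinearMap.toContinuousLinearMap (b.coord 1), ?_, ?_, ?_, ?_, ?_⟩
  · simp [← hb0, Module.Basis.coord_apply, Module.Basis.repr_self]
  · simp [← hb1, Module.Basis.coord_apply, Module.Basis.repr_self]
  · simp [← hb0, Module.Basis.coord_apply, Module.Basis.repr_self]
  · simp [← hb1, Module.Basis.coord_apply, Module.Basis.repr_self]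
  · intro w
    have := b.sum_repr w
    rw [Fin.sum_univ_two, hb0, hb1] at this
    simp only [LinearMap.coe_toContinuousLinearMap', Module.Basis.coord_apply]
    exact this.symm

lemma flow_cont_dep
    {A : EuclideanSpace ℝ (Fin 2) → EuclideanSpace ℝ (Fin 2)} (hA : ContDiff ℝ 1 A)
    {F : ℝ → EuclideanSpace ℝ (Fin 2) → EuclideanSpace ℝ (Fin 2)}
    (hF0 : ∀ y, F 0 y = y)
    (hFderiv : ∀ y, ∀ t : ℝ, HasDerivAt (fun τ => F τ y) (A (F t y)) t)
    (x₀ : EuclideanSpace ℝ (Fin 2)) {b : ℝ} (hb : 0 ≤ b) :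
    ∀ ε > 0, ∃ δ > 0, ∀ y, dist y x₀ ≤ δ → ∀ t ∈ Set.Icc (0:ℝ) b,
      dist (F t y) (F t x₀) ≤ ε := by
  have hFc : ∀ y, Continuous fun t => F t y := fun y =>
    continuous_iff_continuousAt.2 fun t => (hFderiv y t).continuousAt
  set O : Set (EuclideanSpace ℝ (Fin 2)) := (fun t => F t x₀) '' Set.Icc 0 b with hO_def
  have hO : IsCompact O := isCompact_Icc.image (hFc x₀)
  have hK : IsCompact (cthickening 1 O) := hO.cthickening
  obtain ⟨R, hR⟩ := hK.isBounded.subset_closedBall 0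
  set B : Set (EuclideanSpace ℝ (Fin 2)) := closedBall (0 : EuclideanSpace ℝ (Fin 2)) R with hB_def
  have hfd : Continuous (fderiv ℝ A) := hA.continuous_fderiv one_ne_zero
  obtain ⟨C, hC⟩ := (isCompact_closedBall (0 : EuclideanSpace ℝ (Fin 2)) R).exists_bound_of_continuousOn hfd.continuousOn
  set Lr : ℝ := max C 0 with hLr_def
  have hLr0 : 0 ≤ Lr := le_max_right _ _
  set L : NNReal := Lr.toNNReal with hL_def
  have hLcoe : (L : ℝ) = Lr := Real.coe_toNNReal _ hLr0
  have hlip : LipschitzOnWith L A B := by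
    apply Convex.lipschitzOnWith_of_nnnorm_fderiv_le (𝕜 := ℝ)
      (fun x _ => (hA.differentiable one_ne_zero).differentiableAt)
      (fun x hx => ?_) (convex_closedBall 0 R)
    rw [← NNReal.coe_le_coe, coe_nnnorm, hLcoe]
    exact le_trans (hC x hx) (le_max_left _ _)
  intro ε hε
  set r : ℝ := min ε 1 with hr_def
  have hr0 : 0 < r := lt_min hε one_pos
  have hr1 : r ≤ 1 := min_le_right _ _
  have hrε : r ≤ ε := min_le_left _ _
  set δ : ℝ := r / 2 * Real.exp (-(Lr * b)) with hδ_def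
  have hδ0 : 0 < δ := by positivity
  have hδ1 : δ ≤ 1 := by
    have h1 : Real.exp (-(Lr * b)) ≤ 1 := Real.exp_le_one_iff.2 (by nlinarith)
    nlinarith
  refine ⟨δ, hδ0, fun y hy => ?_⟩
  set d : ℝ → ℝ := fun τ => dist (F τ y) (F τ x₀) with hd_def
  have hdc : Continuous d := ((hFc y).dist (hFc x₀))
  have hd0 : d 0 ≤ δ := by simpa [hd_def, hF0] using hy
  -- the Gronwall step
  have haveGron : ∀ c ∈ Set.Icc (0:ℝ) b, (∀ τ ∈ Set.Icc (0:ℝ) c, d τ ≤ 1) →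
      ∀ τ ∈ Set.Icc (0:ℝ) c, d τ ≤ r / 2 := by
    intro c hc h1 τ hτ
    have hmem : ∀ g : ℝ → EuclideanSpace ℝ (Fin 2), (∀ t ∈ Set.Icc (0:ℝ) c, dist (g t) (F t x₀) ≤ 1) →
        ∀ t ∈ Set.Ico (0:ℝ) c, g t ∈ B := by
      intro g hg t ht
      have htb : t ∈ Set.Icc (0:ℝ) b := ⟨ht.1, le_trans (le_of_lt ht.2) hc.2⟩
      have hOx : F t x₀ ∈ O := ⟨t, htb, rfl⟩
      exact hR (mem_cthickening_of_dist_le (g t) (F t x₀) 1 O hOx (hg t ⟨ht.1, le_of_lt ht.2⟩))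
    have key := dist_le_of_trajectories_ODE_of_mem (v := fun _ => A) (s := fun _ => B)
      (K := L) (fun _ _ => hlip)
      ((hFc y).continuousOn)
      (fun t _ => (hFderiv y t).hasDerivWithinAt)
      (hmem _ (fun t ht => h1 t ht))
      ((hFc x₀).continuousOn)
      (fun t _ => (hFderiv x₀ t).hasDerivWithinAt)
      (hmem _ (fun t _ => by simp [dist_self]))
      (by simpa [hF0] using hy)
      τ ⟨hτ.1, hτ.2⟩
    have hτb : τ ≤ b := le_trans hτ.2 hc.2
    calc d τ ≤ δ * Real.exp (L * (τ - 0)) := key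
      _ = r / 2 * (Real.exp (-(Lr * b)) * Real.exp (Lr * τ)) := by
          rw [hLcoe, hδ_def]; ring_nf
      _ ≤ r / 2 * 1 := by
          rw [← Real.exp_add]
          have : Real.exp (-(Lr * b) + Lr * τ) ≤ 1 :=
            Real.exp_le_one_iff.2 (by nlinarith)
          nlinarith
      _ = r / 2 := by ring
  -- bootstrap
  set S : Set ℝ := {t | t ∈ Set.Icc (0:ℝ) b ∧ ∀ τ ∈ Set.Icc (0:ℝ) t, d τ ≤ 1} with hS_def
  have h0S : (0:ℝ) ∈ S := by
    refine ⟨⟨le_refl _, hb⟩, fun τ hτ => ?_⟩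
    have : τ = 0 := le_antisymm hτ.2 hτ.1
    rw [this]; exact le_trans hd0 hδ1
  have hSne : S.Nonempty := ⟨0, h0S⟩
  have hSbdd : BddAbove S := ⟨b, fun t ht => ht.1.2⟩
  set c : ℝ := sSup S with hc_def
  have hc0 : 0 ≤ c := le_csSup hSbdd h0S
  have hcb : c ≤ b := csSup_le hSne fun t ht => ht.1.2
  have hcS : c ∈ S := by
    refine ⟨⟨hc0, hcb⟩, fun τ hτ => ?_⟩
    rcases lt_or_eq_of_le hτ.2 with hlt | heq
    · obtain ⟨t, htS, hτt⟩ := exists_lt_of_lt_csSup hSne hlt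
      exact htS.2 τ ⟨hτ.1, le_of_lt hτt⟩
    · rw [heq]
      rcases eq_or_lt_of_le hc0 with h0 | h0
      · rw [← h0]; exact le_trans hd0 hδ1
      · have hsub : Set.Ico (0:ℝ) c ⊆ {u | d u ≤ 1} := by
          intro u hu
          obtain ⟨t, htS, hut⟩ := exists_lt_of_lt_csSup hSne hu.2
          exact htS.2 u ⟨hu.1, le_of_lt hut⟩
        have hclosed : IsClosed {u | d u ≤ 1} := isClosed_le hdc continuous_const
        have hmemcl : c ∈ closure (Set.Ico (0:ℝ) c) := by
          rw [closure_Ico (ne_of_lt h0)]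
          exact ⟨le_of_lt h0, le_refl _⟩
        exact hclosed.closure_subset_iff.2 hsub hmemcl
  have hceqb : c = b := by
    by_contra hne
    have hclt : c < b := lt_of_le_of_ne hcb hne
    have hdc_half : d c ≤ r / 2 := haveGron c ⟨hc0, hcb⟩ hcS.2 c ⟨hc0, le_refl _⟩
    have hdc1 : d c < 1 := lt_of_le_of_lt hdc_half (by nlinarith)
    have hev : ∀ᶠ τ in 𝓝 c, d τ < 1 := (hdc.continuousAt).eventually_lt_const hdc1
    obtain ⟨η, hη0, hη⟩ := Metric.eventually_nhds_iff.1 hev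
    set c' : ℝ := min (c + η / 2) b with hc'_def
    have hcc' : c < c' := lt_min (by linarith) hclt
    have hc'S : c' ∈ S := by
      refine ⟨⟨le_trans hc0 (le_of_lt hcc'), min_le_right _ _⟩, fun τ hτ => ?_⟩
      rcases le_or_gt τ c with h | h
      · exact hcS.2 τ ⟨hτ.1, h⟩
      · have : dist τ c < η := by
          rw [Real.dist_eq, abs_of_pos (by linarith)]
          have : τ ≤ c + η / 2 := le_trans hτ.2 (min_le_left _ _)
          linarith
        exact le_of_lt (hη this)
    have : c' ≤ c := le_csSup hSbdd hc'S
    linarith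
  intro t ht
  have := haveGron b ⟨hb, le_refl _⟩ (hceqb ▸ hcS.2) t ht
  nlinarith

set_option maxHeartbeats 4000000 in
/-- Lemma 2.2: on a cross-section of a C¹ planar flow, the arclength of the first-return
orbit segment depends continuously on the base point, at any point whose first-return
segment avoids the endpoints of the cross-section. -/
theorem first_return_arclength_continuous
    (A : EuclideanSpace ℝ (Fin 2) → EuclideanSpace ℝ (Fin 2))
    (hA : ContDiff ℝ 1 A)
    (F : ℝ → EuclideanSpace ℝ (Fin 2) → EuclideanSpace ℝ (Fin 2))
    (hF0 : ∀ y, F 0 y = y)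
    (hFadd : ∀ s t : ℝ, ∀ y, F (s + t) y = F s (F t y))
    (hFderiv : ∀ y, ∀ t : ℝ, HasDerivAt (fun τ => F τ y) (A (F t y)) t)
    (p v : EuclideanSpace ℝ (Fin 2)) (hv : v ≠ 0)
    (htrans : ∀ y ∈ (fun s : ℝ => p + s • v) '' Set.Icc (0:ℝ) 1,
      LinearIndependent ℝ ![A y, v])
    (T : ℝ → ℝ)
    (hTpos : ∀ s ∈ Set.Icc (0:ℝ) 1, 0 < T s)
    (hTret : ∀ s ∈ Set.Icc (0:ℝ) 1,
      F (T s) (p + s • v) ∈ (fun s : ℝ => p + s • v) '' Set.Icc (0:ℝ) 1)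
    (hTfirst : ∀ s ∈ Set.Icc (0:ℝ) 1, ∀ u : ℝ, 0 < u → u < T s →
      F u (p + s • v) ∉ (fun s : ℝ => p + s • v) '' Set.Icc (0:ℝ) 1)
    (s₀ : ℝ) (hs₀ : s₀ ∈ Set.Icc (0:ℝ) 1)
    (hend : ∀ t : ℝ, 0 < t → t ≤ T s₀ →
      F t (p + s₀ • v) ≠ p ∧ F t (p + s₀ • v) ≠ p + v) :
    ContinuousWithinAt (fun s : ℝ => ∫ t in (0:ℝ)..(T s), ‖A (F t (p + s • v))‖)
      (Set.Icc (0:ℝ) 1) s₀ := by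
  have hFc : ∀ y, Continuous fun t => F t y := fun y =>
    continuous_iff_continuousAt.2 fun t => (hFderiv y t).continuousAt
  set x₀ : EuclideanSpace ℝ (Fin 2) := p + s₀ • v with hx₀_def
  have hT0 : 0 < T s₀ := hTpos s₀ hs₀
  set b : ℝ := T s₀ + 1 with hb_def
  have hb : (0:ℝ) ≤ b := by linarith
  have hxd : ∀ s : ℝ, dist (p + s • v) x₀ = |s - s₀| * ‖v‖ := by
    intro s
    rw [hx₀_def, dist_eq_norm]
    have : p + s • v - (p + s₀ • v) = (s - s₀) • v := by
      rw [sub_smul]; abel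
    rw [this, norm_smul, Real.norm_eq_abs]
  -- continuous dependence in terms of the parameter s
  have hdeps : ∀ ε > 0, ∃ ρ > 0, ∀ s : ℝ, |s - s₀| ≤ ρ → ∀ t ∈ Set.Icc (0:ℝ) b,
      dist (F t (p + s • v)) (F t x₀) ≤ ε := by
    intro ε hε
    obtain ⟨δ, hδ0, hδ⟩ := flow_cont_dep hA hF0 hFderiv x₀ hb ε hε
    refine ⟨δ / (‖v‖ + 1), by positivity, fun s hs t ht => ?_⟩
    refine hδ (p + s • v) ?_ t ht
    rw [hxd s]
    have hv1 : ‖v‖ ≤ ‖v‖ + 1 := by linarith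
    calc |s - s₀| * ‖v‖ ≤ (δ / (‖v‖ + 1)) * (‖v‖ + 1) :=
          mul_le_mul hs hv1 (norm_nonneg v) (by positivity)
      _ = δ := by field_simp
  -- uniform positive lower bound for the return time near s₀
  have hlow : ∃ δ₁ > 0, ∃ ρ₁ > 0, ∀ s ∈ Set.Icc (0:ℝ) 1, |s - s₀| ≤ ρ₁ → δ₁ < T s := by
    obtain ⟨φ₀, ψ₀, hφ₀A, hφ₀v, -, -, -⟩ := exists_dual_pair (htrans x₀ ⟨s₀, hs₀, rfl⟩)
    have hφ₀Ac : ContinuousAt (fun z => φ₀ (A z)) x₀ :=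
      (φ₀.continuous.comp hA.continuous).continuousAt
    obtain ⟨η, hη0, hη⟩ := Metric.continuousAt_iff.1 hφ₀Ac (1/2) (by norm_num)
    obtain ⟨ρ₁, hρ₁0, hρ₁⟩ := hdeps (η / 2) (by positivity)
    have hF0c : ContinuousAt (fun t => F t x₀) 0 := (hFc x₀).continuousAt
    obtain ⟨δ', hδ'0, hδ'⟩ := Metric.continuousAt_iff.1 hF0c (η / 2) (by positivity)
    set δ₁ : ℝ := min (δ' / 2) b with hδ₁_def
    have hδ₁0 : 0 < δ₁ := lt_min (by linarith) (by linarith)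
    refine ⟨δ₁, hδ₁0, ρ₁, hρ₁0, fun s hs hsρ => ?_⟩
    -- derivative of the φ₀ coordinate is > 1/2 on (0, δ₁]
    have hpos : ∀ t ∈ Set.Ioc (0:ℝ) δ₁, (1:ℝ)/2 < φ₀ (A (F t (p + s • v))) := by
      intro t ht
      have htb : t ∈ Set.Icc (0:ℝ) b := ⟨le_of_lt ht.1, le_trans ht.2 (min_le_right _ _)⟩
      have h1 : dist (F t (p + s • v)) (F t x₀) ≤ η / 2 := hρ₁ s hsρ t htb
      have h2 : dist (F t x₀) x₀ < η / 2 := by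
        have : dist t (0:ℝ) < δ' := by
          rw [Real.dist_eq, sub_zero, abs_of_pos ht.1]
          exact lt_of_le_of_lt ht.2 (lt_of_le_of_lt (min_le_left _ _) (by linarith))
        simpa [hF0] using hδ' this
      have h3 : dist (F t (p + s • v)) x₀ < η :=
        lt_of_le_of_lt (dist_triangle _ (F t x₀) x₀) (by linarith)
      have := hη h3
      rw [Real.dist_eq, hφ₀A] at this
      cases' abs_lt.1 this with h4 h5
      linarith
    -- the φ₀ coordinate is strictly increasing on [0, δ₁]
    set h₀ : ℝ → ℝ := fun t => φ₀ (F t (p + s • v) - p) with hh₀_def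
    have hh₀der : ∀ t : ℝ, HasDerivAt h₀ (φ₀ (A (F t (p + s • v)))) t := by
      intro t
      exact (φ₀.hasFDerivAt).comp_hasDerivAt t ((hFderiv (p + s • v) t).sub_const p)
    have hh₀mono : StrictMonoOn h₀ (Set.Icc 0 δ₁) := by
      apply strictMonoOn_of_deriv_pos (convex_Icc 0 δ₁)
      · exact (φ₀.continuous.comp ((hFc _).sub continuous_const)).continuousOn
      · intro t ht
        rw [interior_Icc] at ht
        rw [(hh₀der t).deriv]
        have := hpos t ⟨ht.1, le_of_lt ht.2⟩
        linarith
    have hh₀0 : h₀ 0 = 0 := by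
      simp [hh₀_def, hF0, hφ₀v]
    by_contra hcon
    push_neg at hcon
    have hTs_pos : 0 < T s := hTpos s hs
    obtain ⟨σ, hσ, heq⟩ := hTret s hs
    have hTmem : T s ∈ Set.Icc (0:ℝ) δ₁ := ⟨le_of_lt hTs_pos, hcon⟩
    have h0mem : (0:ℝ) ∈ Set.Icc (0:ℝ) δ₁ := ⟨le_refl _, le_of_lt hδ₁0⟩
    have hgt : h₀ 0 < h₀ (T s) := hh₀mono h0mem hTmem hTs_pos
    have : h₀ (T s) = 0 := by
      simp only [hh₀_def]
      rw [← heq]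
      simp [hφ₀v]
    rw [hh₀0, this] at hgt
    exact lt_irrefl _ hgt
  -- upper bound for the return time near s₀
  have hupp : ∀ ε : ℝ, 0 < ε → ε ≤ 1 → ∃ ρ > 0, ∀ s ∈ Set.Icc (0:ℝ) 1,
      |s - s₀| ≤ ρ → T s < T s₀ + ε := by
    obtain ⟨s₁, hs₁, hq⟩ := hTret s₀ hs₀
    simp only at hq
    have hqend := hend (T s₀) hT0 (le_refl _)
    have hs₁0 : 0 < s₁ := by
      rcases eq_or_lt_of_le hs₁.1 with h | h
      · exfalso; apply hqend.1; rw [← hq, ← h]; simp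
      · exact h
    have hs₁1 : s₁ < 1 := by
      rcases eq_or_lt_of_le hs₁.2 with h | h
      · exfalso; apply hqend.2; rw [← hq, h]; simp
      · exact h
    obtain ⟨φ, ψ, hφA, hφv, hψA, hψv, hexp⟩ :=
      exists_dual_pair (htrans (F (T s₀) x₀) ⟨s₁, hs₁, hq⟩)
    set h : ℝ → ℝ → ℝ := fun s t => φ (F t (p + s • v) - p) with hh_def
    have hhder : ∀ s : ℝ, ∀ t : ℝ, HasDerivAt (h s) (φ (A (F t (p + s • v)))) t :=
      fun s t => (φ.hasFDerivAt).comp_hasDerivAt t ((hFderiv (p + s • v) t).sub_const p)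
    have hh0 : h s₀ (T s₀) = 0 := by
      simp only [hh_def, ← hx₀_def, ← hq]
      simp [hφv, hx₀_def, ← hq]
    have hder1 : φ (A (F (T s₀) x₀)) = 1 := hφA
    -- slope of h s₀ near T s₀ is > 1/2
    have hslope : Tendsto (slope (h s₀) (T s₀)) (𝓝[≠] (T s₀)) (𝓝 1) := by
      have := hasDerivAt_iff_tendsto_slope.1 (hhder s₀ (T s₀))
      rw [← hx₀_def] at this
      rwa [hder1] at this
    have hslope_ev : ∀ᶠ t in 𝓝[≠] (T s₀), (1:ℝ)/2 < slope (h s₀) (T s₀) t :=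
      hslope.eventually (eventually_gt_nhds (by norm_num))
    rw [eventually_nhdsWithin_iff] at hslope_ev
    obtain ⟨θ₀, hθ₀0, hθ₀⟩ := Metric.eventually_nhds_iff.1 hslope_ev
    -- the ψ coordinate of the orbit of s₀ stays near s₁
    set g : ℝ → ℝ := fun t => ψ (F t x₀ - p) with hg_def
    have hgc : ContinuousAt g (T s₀) :=
      (ψ.continuous.comp ((hFc x₀).sub continuous_const)).continuousAt
    have hgval : g (T s₀) = s₁ := by
      simp only [hg_def, ← hq]; simp [hψv, hx₀_def, ← hq]
    set m : ℝ := min s₁ (1 - s₁) with hm_def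
    have hm0 : 0 < m := lt_min hs₁0 (by linarith)
    obtain ⟨θ₁, hθ₁0, hθ₁⟩ := Metric.continuousAt_iff.1 hgc (m/2) (by positivity)
    intro ε hε0 hε1
    set θ : ℝ := min θ₀ (min θ₁ (min ε (T s₀))) / 2 with hθ_def
    have hθ0 : 0 < θ := by
      apply half_pos; exact lt_min hθ₀0 (lt_min hθ₁0 (lt_min hε0 hT0))
    have hθθ₀ : θ < θ₀ := by
      have : min θ₀ (min θ₁ (min ε (T s₀))) ≤ θ₀ := min_le_left _ _
      rw [hθ_def]; linarith
    have hθθ₁ : θ < θ₁ := by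
      have h1 : min θ₀ (min θ₁ (min ε (T s₀))) ≤ θ₁ :=
        le_trans (min_le_right _ _) (min_le_left _ _)
      rw [hθ_def]; linarith
    have hθε : θ < ε := by
      have h1 : min θ₀ (min θ₁ (min ε (T s₀))) ≤ ε :=
        le_trans (min_le_right _ _) (le_trans (min_le_right _ _) (min_le_left _ _))
      rw [hθ_def]; linarith
    have hθT : θ < T s₀ := by
      have h1 : min θ₀ (min θ₁ (min ε (T s₀))) ≤ T s₀ :=
        le_trans (min_le_right _ _) (le_trans (min_le_right _ _) (min_le_right _ _))
      rw [hθ_def]; linarith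
    set t₁ : ℝ := T s₀ - θ with ht₁_def
    set t₂ : ℝ := T s₀ + θ with ht₂_def
    have ht₁0 : 0 < t₁ := by rw [ht₁_def]; linarith
    have ht₂b : t₂ ≤ b := by rw [ht₂_def, hb_def]; linarith
    -- sign of h s₀ at t₁ and t₂
    have hsl₁ : (1:ℝ)/2 < slope (h s₀) (T s₀) t₁ := by
      apply hθ₀
      · rw [Real.dist_eq, ht₁_def]; rw [abs_of_nonpos (by linarith)]; linarith
      · rw [ht₁_def]; intro hcon; simp only [Set.mem_compl_iff, Set.mem_singleton_iff] at hcon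
        apply absurd hcon; simp; linarith
    have hsl₂ : (1:ℝ)/2 < slope (h s₀) (T s₀) t₂ := by
      apply hθ₀
      · rw [Real.dist_eq, ht₂_def]; rw [abs_of_nonneg (by linarith)]; linarith
      · rw [ht₂_def]; intro hcon; simp only [Set.mem_compl_iff, Set.mem_singleton_iff] at hcon
        apply absurd hcon; simp; linarith
    have hht₁ : h s₀ t₁ < -(θ/2) := by
      have hs := hsl₁
      rw [slope_def_field, hh0, sub_zero] at hs
      have hne : t₁ - T s₀ < 0 := by rw [ht₁_def]; linarith
      have := (lt_div_iff_of_neg hne).1 hs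
      rw [ht₁_def] at this ⊢
      linarith
    have hht₂ : θ/2 < h s₀ t₂ := by
      have hs := hsl₂
      rw [slope_def_field, hh0, sub_zero] at hs
      have hne : (0:ℝ) < t₂ - T s₀ := by rw [ht₂_def]; linarith
      have := (lt_div_iff₀ hne).1 hs
      rw [ht₂_def] at this ⊢
      linarith
    -- choose ρ so that nearby orbits have close coordinates
    set κ : ℝ := min ((θ/4) / (‖φ‖ + 1)) ((m/4) / (‖ψ‖ + 1)) with hκ_def
    have hκ0 : 0 < κ := lt_min (by positivity) (by positivity)
    obtain ⟨ρ, hρ0, hρ⟩ := hdeps κ hκ0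
    refine ⟨ρ, hρ0, fun s hs hsρ => ?_⟩
    have hclose : ∀ t ∈ Set.Icc (0:ℝ) b,
        |h s t - h s₀ t| ≤ θ/4 ∧ |ψ (F t (p + s • v) - p) - g t| ≤ m/4 := by
      intro t ht
      have hd := hρ s hsρ t ht
      have hdd : ‖F t (p + s • v) - F t (p + s₀ • v)‖ ≤ κ := by
        rw [← dist_eq_norm]; exact hd
      constructor
      · have : h s t - h s₀ t = φ (F t (p + s • v) - F t (p + s₀ • v)) := by
          simp only [hh_def, ← map_sub]; congr 1; abel
        rw [this]
        calc |φ (F t (p + s • v) - F t (p + s₀ • v))| ≤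
            ‖φ‖ * ‖F t (p + s • v) - F t (p + s₀ • v)‖ := φ.le_opNorm _
          _ ≤ ‖φ‖ * κ := by
              apply mul_le_mul_of_nonneg_left hdd (norm_nonneg _)
          _ ≤ ‖φ‖ * ((θ/4) / (‖φ‖ + 1)) := by
              apply mul_le_mul_of_nonneg_left (min_le_left _ _) (norm_nonneg _)
          _ ≤ θ/4 := by
              rw [div_eq_mul_inv, ← mul_assoc]
              have h1 : ‖φ‖ * (θ/4) ≤ (‖φ‖ + 1) * (θ/4) := by nlinarith [norm_nonneg φ, hθ0]
              calc ‖φ‖ * (θ/4) * (‖φ‖ + 1)⁻¹ ≤ (‖φ‖ + 1) * (θ/4) * (‖φ‖ + 1)⁻¹ := by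
                    apply mul_le_mul_of_nonneg_right h1; positivity
                _ = θ/4 := by field_simp
      · have : ψ (F t (p + s • v) - p) - g t = ψ (F t (p + s • v) - F t (p + s₀ • v)) := by
          simp only [hg_def, hx₀_def, ← map_sub]; congr 1; abel
        rw [this]
        calc |ψ (F t (p + s • v) - F t (p + s₀ • v))| ≤
            ‖ψ‖ * ‖F t (p + s • v) - F t (p + s₀ • v)‖ := ψ.le_opNorm _
          _ ≤ ‖ψ‖ * κ := by
              apply mul_le_mul_of_nonneg_left hdd (norm_nonneg _)
          _ ≤ ‖ψ‖ * ((m/4) / (‖ψ‖ + 1)) := by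
              apply mul_le_mul_of_nonneg_left (min_le_right _ _) (norm_nonneg _)
          _ ≤ m/4 := by
              rw [div_eq_mul_inv, ← mul_assoc]
              have h1 : ‖ψ‖ * (m/4) ≤ (‖ψ‖ + 1) * (m/4) := by nlinarith [norm_nonneg ψ, hm0]
              calc ‖ψ‖ * (m/4) * (‖ψ‖ + 1)⁻¹ ≤ (‖ψ‖ + 1) * (m/4) * (‖ψ‖ + 1)⁻¹ := by
                    apply mul_le_mul_of_nonneg_right h1; positivity
                _ = m/4 := by field_simp
    have ht₁b : t₁ ∈ Set.Icc (0:ℝ) b := ⟨le_of_lt ht₁0, by rw [ht₁_def, hb_def]; linarith⟩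
    have ht₂bm : t₂ ∈ Set.Icc (0:ℝ) b := ⟨by rw [ht₂_def]; linarith, ht₂b⟩
    have hst₁ : h s t₁ < 0 := by
      have := (hclose t₁ ht₁b).1
      have h2 := abs_le.1 this
      linarith [hht₁, h2.2]
    have hst₂ : 0 < h s t₂ := by
      have := (hclose t₂ ht₂bm).1
      have h2 := abs_le.1 this
      linarith [hht₂, h2.1]
    -- intermediate value theorem
    have ht₁₂ : t₁ ≤ t₂ := by rw [ht₁_def, ht₂_def]; linarith
    have hcont : ContinuousOn (h s) (Set.Icc t₁ t₂) :=
      (φ.continuous.comp ((hFc _).sub continuous_const)).continuousOn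
    have hivt := intermediate_value_Icc ht₁₂ hcont
    have h0mem : (0:ℝ) ∈ Set.Icc (h s t₁) (h s t₂) := ⟨le_of_lt hst₁, le_of_lt hst₂⟩
    obtain ⟨t', ht'mem, ht'0⟩ := hivt h0mem
    -- the orbit point at time t' lies on the segment
    set z : EuclideanSpace ℝ (Fin 2) := F t' (p + s • v) with hz_def
    have hzexp : z - p = φ (z - p) • A (F (T s₀) x₀) + ψ (z - p) • v := hexp (z - p)
    have hφz : φ (z - p) = 0 := ht'0
    set σ : ℝ := ψ (z - p) with hσ_def
    have hzeq : z = p + σ • v := by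
      rw [hφz, zero_smul, zero_add] at hzexp
      rw [← hzexp]; abel
    have ht'b : t' ∈ Set.Icc (0:ℝ) b :=
      ⟨le_trans ht₁b.1 ht'mem.1, le_trans ht'mem.2 ht₂b⟩
    have hgt' : |g t' - s₁| < m/2 := by
      have : dist t' (T s₀) < θ₁ := by
        rw [Real.dist_eq]
        have h1 : t' - T s₀ ≤ θ := by have := ht'mem.2; rw [ht₂_def] at this; linarith
        have h2 : -(θ) ≤ t' - T s₀ := by have := ht'mem.1; rw [ht₁_def] at this; linarith
        rw [abs_lt]; constructor <;> linarith [hθθ₁]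
      have := hθ₁ this
      rwa [Real.dist_eq, hgval] at this
    have hσs₁ : |σ - s₁| < m := by
      have h1 := (hclose t' ht'b).2
      have : σ - s₁ = (ψ (F t' (p + s • v) - p) - g t') + (g t' - s₁) := by
        rw [hσ_def, hz_def]; ring
      rw [this]
      calc |(ψ (F t' (p + s • v) - p) - g t') + (g t' - s₁)| ≤
          |ψ (F t' (p + s • v) - p) - g t'| + |g t' - s₁| := abs_add_le _ _
        _ < m/4 + m/2 := by
            apply add_lt_add_of_le_of_lt h1 hgt'
        _ ≤ m := by linarith
    have hσmem : σ ∈ Set.Icc (0:ℝ) 1 := by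
      have := abs_lt.1 hσs₁
      have hm1 : m ≤ s₁ := min_le_left _ _
      have hm2 : m ≤ 1 - s₁ := min_le_right _ _
      constructor <;> nlinarith [this.1, this.2]
    have hzSigma : z ∈ (fun s : ℝ => p + s • v) '' Set.Icc (0:ℝ) 1 := ⟨σ, hσmem, hzeq.symm⟩
    have ht'pos : 0 < t' := lt_of_lt_of_le ht₁0 ht'mem.1
    have hTle : T s ≤ t' := by
      by_contra hcon
      push_neg at hcon
      exact hTfirst s hs t' ht'pos hcon (hz_def ▸ hzSigma)
    calc T s ≤ t' := hTle
      _ ≤ t₂ := ht'mem.2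
      _ < T s₀ + ε := by rw [ht₂_def]; linarith
  -- eventual membership facts
  have hmem_ev : ∀ ρ : ℝ, 0 < ρ → ∀ᶠ s in 𝓝[Set.Icc (0:ℝ) 1] s₀,
      s ∈ Set.Icc (0:ℝ) 1 ∧ |s - s₀| ≤ ρ := by
    intro ρ hρ0
    apply Filter.Eventually.and
    · exact eventually_mem_nhdsWithin
    · apply Filter.Eventually.filter_mono nhdsWithin_le_nhds
      filter_upwards [Metric.closedBall_mem_nhds s₀ hρ0] with s hs
      rwa [Metric.mem_closedBall, Real.dist_eq] at hs
  obtain ⟨δ₁, hδ₁0, ρ₁, hρ₁0, hlow'⟩ := hlow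
  -- lower semicontinuity of the return time
  have hTlow : ∀ ε : ℝ, 0 < ε → ∀ᶠ s in 𝓝[Set.Icc (0:ℝ) 1] s₀, T s₀ - ε < T s := by
    intro ε hε
    by_contra hcon
    rw [Filter.not_eventually] at hcon
    have hfreq := hcon.and_eventually (hmem_ev ρ₁ hρ₁0)
    obtain ⟨u, hu_t, hu_p⟩ := Filter.exists_seq_forall_of_frequently hfreq
    have hTn : ∀ n, T (u n) ≤ T s₀ - ε := fun n => not_lt.1 (hu_p n).1
    have hmemn : ∀ n, u n ∈ Set.Icc (0:ℝ) 1 := fun n => (hu_p n).2.1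
    have hδT : ∀ n, δ₁ < T (u n) := fun n => hlow' (u n) (hmemn n) (hu_p n).2.2
    have hτmem : ∀ n, T (u n) ∈ Set.Icc δ₁ (T s₀ - ε) :=
      fun n => ⟨le_of_lt (hδT n), hTn n⟩
    obtain ⟨u₀, hu₀mem, g₁, hg₁, hτconv⟩ := isCompact_Icc.tendsto_subseq hτmem
    choose σf hσfmem hσfeq using fun n => hTret (u n) (hmemn n)
    obtain ⟨σl, hσlmem, g₂, hg₂, hσconv⟩ :=
      isCompact_Icc.tendsto_subseq (fun n => hσfmem (g₁ n))
    set w : ℕ → ℝ := fun n => u (g₁ (g₂ n)) with hw_def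
    set τ' : ℕ → ℝ := fun n => T (u (g₁ (g₂ n))) with hτ'_def
    have hτ'conv : Tendsto τ' atTop (𝓝 u₀) := hτconv.comp hg₂.tendsto_atTop
    have hwconv : Tendsto w atTop (𝓝 s₀) :=
      ((hu_t.mono_right nhdsWithin_le_nhds).comp hg₁.tendsto_atTop).comp hg₂.tendsto_atTop
    have hτ'b : ∀ n, τ' n ∈ Set.Icc (0:ℝ) b := by
      intro n
      have h1 := hτmem (g₁ (g₂ n))
      exact ⟨le_trans (le_of_lt hδ₁0) h1.1, by rw [hb_def]; linarith [h1.2]⟩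
    have hLHS : Tendsto (fun n => F (τ' n) (p + w n • v)) atTop (𝓝 (F u₀ x₀)) := by
      rw [Metric.tendsto_nhds]
      intro η hη
      obtain ⟨ρ', hρ'0, hρ'⟩ := hdeps (η/3) (by positivity)
      have h1 : ∀ᶠ n in atTop, |w n - s₀| ≤ ρ' := by
        filter_upwards [hwconv (Metric.closedBall_mem_nhds s₀ hρ'0)] with n hn
        rwa [Set.mem_preimage, Metric.mem_closedBall, Real.dist_eq] at hn
      have h2 : Tendsto (fun n => F (τ' n) x₀) atTop (𝓝 (F u₀ x₀)) :=
        ((hFc x₀).continuousAt.tendsto).comp hτ'conv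
      have h2' : ∀ᶠ n in atTop, dist (F (τ' n) x₀) (F u₀ x₀) < η/2 :=
        Metric.tendsto_nhds.1 h2 (η/2) (by positivity)
      filter_upwards [h1, h2'] with n hn1 hn2
      calc dist (F (τ' n) (p + w n • v)) (F u₀ x₀) ≤
          dist (F (τ' n) (p + w n • v)) (F (τ' n) x₀) + dist (F (τ' n) x₀) (F u₀ x₀) :=
            dist_triangle _ _ _
        _ ≤ η/3 + dist (F (τ' n) x₀) (F u₀ x₀) := by
            have := hρ' (w n) hn1 (τ' n) (hτ'b n)
            linarith
        _ < η := by linarith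
    have hRHS : Tendsto (fun n => p + σf (g₁ (g₂ n)) • v) atTop (𝓝 (p + σl • v)) :=
      tendsto_const_nhds.add (hσconv.smul_const v)
    have heqn : ∀ n, F (τ' n) (p + w n • v) = p + σf (g₁ (g₂ n)) • v := by
      intro n
      have := hσfeq (g₁ (g₂ n))
      simp only at this
      exact this.symm
    have hfinal : F u₀ x₀ = p + σl • v :=
      tendsto_nhds_unique (hLHS.congr heqn) hRHS
    have hu₀pos : 0 < u₀ := lt_of_lt_of_le hδ₁0 hu₀mem.1
    have hu₀lt : u₀ < T s₀ := lt_of_le_of_lt hu₀mem.2 (by linarith)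
    exact hTfirst s₀ hs₀ u₀ hu₀pos hu₀lt ⟨σl, hσlmem, hfinal.symm⟩
  -- continuity of the return time at s₀
  have hTtend : Tendsto T (𝓝[Set.Icc (0:ℝ) 1] s₀) (𝓝 (T s₀)) := by
    rw [Metric.tendsto_nhds]
    intro ε hε
    obtain ⟨ρ, hρ0, hρ⟩ := hupp (min (ε/2) 1) (lt_min (by positivity) one_pos) (min_le_right _ _)
    have hup_ev : ∀ᶠ s in 𝓝[Set.Icc (0:ℝ) 1] s₀, T s < T s₀ + min (ε/2) 1 := by
      filter_upwards [hmem_ev ρ hρ0] with s hs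
      exact hρ s hs.1 hs.2
    filter_upwards [hup_ev, hTlow (ε/2) (by positivity)] with s h1 h2
    rw [Real.dist_eq, abs_lt]
    have : min (ε/2) 1 ≤ ε/2 := min_le_left _ _
    constructor <;> linarith
  -- final: continuity of the arclength integral
  set K : Set (EuclideanSpace ℝ (Fin 2)) :=
    Metric.cthickening 1 ((fun t => F t x₀) '' Set.Icc 0 b) with hK_def
  have hKc : IsCompact K := (isCompact_Icc.image (hFc x₀)).cthickening
  have hx₀K : ∀ t ∈ Set.Icc (0:ℝ) b, F t x₀ ∈ K := fun t ht =>
    Metric.self_subset_cthickening _ ⟨t, ht, rfl⟩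
  obtain ⟨M, hM⟩ := hKc.exists_bound_of_continuousOn hA.continuous.continuousOn
  set M0 : ℝ := max M 0 with hM0_def
  have hM0 : ∀ z ∈ K, ‖A z‖ ≤ M0 := fun z hz => le_trans (hM z hz) (le_max_left _ _)
  have hM00 : (0:ℝ) ≤ M0 := le_max_right _ _
  have hAuc : UniformContinuousOn A K :=
    hKc.uniformContinuousOn_of_continuous hA.continuous.continuousOn
  rw [ContinuousWithinAt, Metric.tendsto_nhds]
  intro ε hε
  set ε₁ : ℝ := ε / (2 * (T s₀ + 1)) with hε₁_def
  have hε₁0 : 0 < ε₁ := by positivity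
  obtain ⟨η, hη0, hη⟩ := Metric.uniformContinuousOn_iff.1 hAuc ε₁ hε₁0
  set κ : ℝ := min (η/2) 1 with hκdef
  obtain ⟨ρa, hρa0, hρa⟩ := hdeps κ (lt_min (by positivity) one_pos)
  set ε₂ : ℝ := min (ε / (2 * (M0 + 1))) 1 with hε₂_def
  have hε₂0 : 0 < ε₂ := lt_min (by positivity) one_pos
  have hT_ev : ∀ᶠ s in 𝓝[Set.Icc (0:ℝ) 1] s₀, |T s - T s₀| < ε₂ := by
    filter_upwards [Metric.tendsto_nhds.1 hTtend ε₂ hε₂0] with s hs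
    rwa [Real.dist_eq] at hs
  filter_upwards [hmem_ev ρa hρa0, hT_ev] with s hs hTs
  have hsI := hs.1
  have hsρ := hs.2
  have habs := abs_lt.1 hTs
  have hTsb : T s ≤ b := by
    have h1 : ε₂ ≤ 1 := min_le_right _ _
    rw [hb_def]; linarith [habs.2]
  have hTs0 : 0 < T s := hTpos s hsI
  have hint1 : ∀ a c : ℝ, IntervalIntegrable (fun t => ‖A (F t (p + s • v))‖)
      MeasureTheory.volume a c :=
    fun a c => ((hA.continuous.comp (hFc _)).norm).intervalIntegrable a c
  have hint0 : ∀ a c : ℝ, IntervalIntegrable (fun t => ‖A (F t (p + s₀ • v))‖)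
      MeasureTheory.volume a c :=
    fun a c => ((hA.continuous.comp (hFc _)).norm).intervalIntegrable a c
  -- membership in K and closeness
  have hmemK : ∀ t ∈ Set.Icc (0:ℝ) b, F t (p + s • v) ∈ K ∧
      dist (F t (p + s • v)) (F t x₀) < η := by
    intro t ht
    have hd := hρa s hsρ t ht
    constructor
    · exact Metric.mem_cthickening_of_dist_le _ (F t x₀) 1 _ ⟨t, ht, rfl⟩
        (le_trans hd (min_le_right _ _))
    · exact lt_of_le_of_lt (le_trans hd (min_le_left _ _)) (by linarith)
  -- splitting the integral
  have hsplit : (∫ t in (0:ℝ)..(T s), ‖A (F t (p + s • v))‖) -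
      (∫ t in (0:ℝ)..(T s₀), ‖A (F t (p + s₀ • v))‖) =
      (∫ t in (0:ℝ)..(T s₀), (‖A (F t (p + s • v))‖ - ‖A (F t (p + s₀ • v))‖)) +
      ∫ t in (T s₀)..(T s), ‖A (F t (p + s • v))‖ := by
    rw [intervalIntegral.integral_sub (hint1 0 (T s₀)) (hint0 0 (T s₀)),
      ← intervalIntegral.integral_add_adjacent_intervals (hint1 0 (T s₀)) (hint1 (T s₀) (T s))]
    ring
  -- first bound
  have hb1 : ‖∫ t in (0:ℝ)..(T s₀), (‖A (F t (p + s • v))‖ - ‖A (F t (p + s₀ • v))‖)‖ ≤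
      ε₁ * |T s₀ - 0| := by
    apply intervalIntegral.norm_integral_le_of_norm_le_const
    intro t ht
    rw [Set.uIoc_of_le (le_of_lt hT0)] at ht
    have htb : t ∈ Set.Icc (0:ℝ) b := ⟨le_of_lt ht.1, by rw [hb_def]; linarith [ht.2]⟩
    obtain ⟨hK1, hd1⟩ := hmemK t htb
    have hK0 : F t x₀ ∈ K := hx₀K t htb
    have hAd : dist (A (F t (p + s • v))) (A (F t x₀)) < ε₁ := hη _ hK1 _ hK0 hd1
    rw [Real.norm_eq_abs]
    calc |‖A (F t (p + s • v))‖ - ‖A (F t (p + s₀ • v))‖| ≤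
        ‖A (F t (p + s • v)) - A (F t (p + s₀ • v))‖ := abs_norm_sub_norm_le _ _
      _ ≤ ε₁ := by
          rw [← dist_eq_norm]
          exact le_of_lt hAd
  -- second bound
  have hb2 : ‖∫ t in (T s₀)..(T s), ‖A (F t (p + s • v))‖‖ ≤ M0 * |T s - T s₀| := by
    apply intervalIntegral.norm_integral_le_of_norm_le_const
    intro t ht
    have htb : t ∈ Set.Icc (0:ℝ) b := by
      rcases le_total (T s₀) (T s) with hc | hc
      · rw [Set.uIoc_of_le hc] at ht
        exact ⟨le_trans (le_of_lt hT0) (le_of_lt ht.1), le_trans ht.2 hTsb⟩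
      · rw [Set.uIoc_of_ge hc] at ht
        exact ⟨le_trans (le_of_lt hTs0) (le_of_lt ht.1), le_trans ht.2 (by rw [hb_def]; linarith)⟩
    obtain ⟨hK1, -⟩ := hmemK t htb
    rw [Real.norm_eq_abs, abs_norm]
    exact hM0 _ hK1
  -- conclude
  rw [Real.dist_eq, hsplit]
  have hq1 : ε₁ * |T s₀ - 0| < ε/2 := by
    rw [sub_zero, abs_of_pos hT0, hε₁_def]
    rw [div_mul_eq_mul_div, div_lt_iff₀ (by linarith : (0:ℝ) < 2 * (T s₀ + 1))]
    nlinarith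
  have hq2 : M0 * |T s - T s₀| < ε/2 := by
    have h1 : |T s - T s₀| < ε / (2 * (M0 + 1)) :=
      lt_of_lt_of_le hTs (min_le_left _ _)
    have h2 : M0 * |T s - T s₀| ≤ M0 * (ε / (2 * (M0 + 1))) := by
      rcases eq_or_lt_of_le hM00 with h | h
      · rw [← h]; simp
      · exact le_of_lt (mul_lt_mul_of_pos_left h1 h)
    have h3 : M0 * (ε / (2 * (M0 + 1))) < ε/2 := by
      rw [← mul_div_assoc, div_lt_iff₀ (by linarith : (0:ℝ) < 2 * (M0 + 1))]
      nlinarith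
    linarith
  calc |(∫ t in (0:ℝ)..(T s₀), (‖A (F t (p + s • v))‖ - ‖A (F t (p + s₀ • v))‖)) +
      ∫ t in (T s₀)..(T s), ‖A (F t (p + s • v))‖| ≤
      |∫ t in (0:ℝ)..(T s₀), (‖A (F t (p + s • v))‖ - ‖A (F t (p + s₀ • v))‖)| +
      |∫ t in (T s₀)..(T s), ‖A (F t (p + s • v))‖| := abs_add_le _ _
    _ ≤ ε₁ * |T s₀ - 0| + M0 * |T s - T s₀| := by
        apply add_le_add
        · exact le_trans (le_of_eq (Real.norm_eq_abs _).symm) hb1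
        · exact le_trans (le_of_eq (Real.norm_eq_abs _).symm) hb2
    _ < ε := by linarith
end

section
/- Let X and Y be compact metric spaces, P : X → X and E : Y → Y continuous maps, and h : X → Y a continuous surjection with h ∘ P = E ∘ h. Assume: (i) E is uniquely ergodic, i.e. there is exactly one E-invariant Borel probability measure ν on Y, and ν has no atoms; (ii) there is a countable family (I_n)_{n ≥ 1} of pairwise disjoint closed subsets of X such that each image h(I_n) is a single point and h restricted to X ∖ ⋃_n I_n is injective. Then any two P-invariant Borel probability measures on X coincide; i.e. P has at most one invariant Borel probability measure. (The core of the proof of Proposition 2.6: a Poincaré map that is topologically semi-conjugate, by collapsing countably many closed intervals to points, to a uniquely ergodic interval exchange transformation is itself uniquely ergodic.) -/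
/-!
Pushing a `P`-invariant probability measure `μ` forward by `h` gives an `E`-invariant one, hence
`ν`. Each `I n` lies in a fibre of `h`, which is `μ`-null because `ν` has no atoms, so `μ` lives
on the complement `C` of `⋃ n, I n`. On `C` the map `h` is injective, and by Lusin–Souslin it
sends Borel sets to Borel sets, so `μ s = ν (h '' (s ∩ C))` for every Borel set `s`.
-/

open MeasureTheory Set

namespace MeasureTheory.Measure

variable {X Y : Type*} [MeasurableSpace X] [MeasurableSpace Y]

theorem map_map_eq_map_of_semiconj {P : X → X} {E : Y → Y} {h : X → Y} {μ : Measure X}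
    (hP : Measurable P) (hE : Measurable E) (hh : Measurable h) (hconj : h ∘ P = E ∘ h)
    (hμ : map P μ = μ) : map E (map h μ) = map h μ := by
  rw [map_map hE hh, ← hconj, ← map_map hh hP, hμ]

variable [TopologicalSpace X] [PolishSpace X] [BorelSpace X]
  [TopologicalSpace Y] [T2Space Y] [BorelSpace Y]

theorem apply_eq_map_apply_image_inter {h : X → Y} (hh : Continuous h) {C : Set X}
    (hC : MeasurableSet C) (hinj : InjOn h C) {μ : Measure X} (hμC : μ Cᶜ = 0) {s : Set X}
    (hs : MeasurableSet s) : μ s = map h μ (h '' (s ∩ C)) := by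
  have himage : MeasurableSet (h '' (s ∩ C)) :=
    (hs.inter hC).image_of_continuousOn_injOn hh.continuousOn (hinj.mono inter_subset_right)
  calc μ s = μ (s ∩ C) := (measure_inter_conull hμC).symm
    _ = μ (h ⁻¹' (h '' (s ∩ C)) ∩ C) := by rw [hinj.preimage_image_inter inter_subset_right]
    _ = μ (h ⁻¹' (h '' (s ∩ C))) := measure_inter_conull hμC
    _ = map h μ (h '' (s ∩ C)) := (map_apply hh.measurable himage).symm

theorem ext_of_map_eq_of_injOn {h : X → Y} (hh : Continuous h) {C : Set X}
    (hC : MeasurableSet C) (hinj : InjOn h C) {μ₁ μ₂ : Measure X} (hμ₁ : μ₁ Cᶜ = 0)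
    (hμ₂ : μ₂ Cᶜ = 0) (hmap : map h μ₁ = map h μ₂) : μ₁ = μ₂ := by
  ext s hs
  rw [apply_eq_map_apply_image_inter hh hC hinj hμ₁ hs,
    apply_eq_map_apply_image_inter hh hC hinj hμ₂ hs, hmap]

end MeasureTheory.Measure

open Measure in
theorem unique_ergodicity_lifts_through_semiconjugacy_general
    {X Y : Type*} [MetricSpace X] [CompactSpace X] [MetricSpace Y]
    [MeasurableSpace X] [BorelSpace X] [MeasurableSpace Y] [BorelSpace Y]
    (P : X → X) (E : Y → Y) (h : X → Y)
    (hP : Continuous P) (hE : Continuous E) (hh : Continuous h)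
    (hconj : h ∘ P = E ∘ h)
    (ν : Measure Y)
    (hνunique : ∀ ν' : Measure Y, IsProbabilityMeasure ν' → Measure.map E ν' = ν' → ν' = ν)
    (hνatom : ∀ y : Y, ν {y} = 0)
    (I : ℕ → Set X)
    (hclosed : ∀ n, IsClosed (I n))
    (hpoint : ∀ n, ∃ y : Y, h '' I n = {y})
    (hinj : Set.InjOn h (⋃ n, I n)ᶜ) :
    ∀ μ₁ μ₂ : Measure X, IsProbabilityMeasure μ₁ → IsProbabilityMeasure μ₂ →
      Measure.map P μ₁ = μ₁ → Measure.map P μ₂ = μ₂ → μ₁ = μ₂ := by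
  have map_eq : ∀ μ : Measure X, IsProbabilityMeasure μ → map P μ = μ → map h μ = ν :=
    fun μ _ hPμ ↦ hνunique _ (isProbabilityMeasure_map hh.aemeasurable)
      (map_map_eq_map_of_semiconj hP.measurable hE.measurable hh.measurable hconj hPμ)
  have union_null : ∀ μ : Measure X, IsProbabilityMeasure μ → map P μ = μ →
      μ (⋃ n, I n)ᶜᶜ = 0 := by
    intro μ hμ hPμ
    rw [compl_compl]
    refine measure_iUnion_null fun n ↦ ?_
    obtain ⟨y, hy⟩ := hpoint n
    refine nonpos_iff_eq_zero.mp ((le_map_apply_image hh.aemeasurable (I n)).trans_eq ?_)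
    rw [map_eq μ hμ hPμ, hy, hνatom]
  intro μ₁ μ₂ hμ₁ hμ₂ hPμ₁ hPμ₂
  exact ext_of_map_eq_of_injOn hh (MeasurableSet.iUnion fun n ↦ (hclosed n).measurableSet).compl
    hinj (union_null μ₁ hμ₁ hPμ₁) (union_null μ₂ hμ₂ hPμ₂)
    ((map_eq μ₁ hμ₁ hPμ₁).trans (map_eq μ₂ hμ₂ hPμ₂).symm)

/-- The core of the proof of Proposition 2.6: a continuous map semi-conjugate, by a map
collapsing countably many pairwise disjoint closed sets to points and injective elsewhere,
to a uniquely ergodic map whose unique invariant measure has no atoms, has at most one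
invariant Borel probability measure. -/
theorem unique_ergodicity_lifts_through_semiconjugacy
    {X Y : Type*} [MetricSpace X] [CompactSpace X] [MetricSpace Y] [CompactSpace Y]
    [MeasurableSpace X] [BorelSpace X] [MeasurableSpace Y] [BorelSpace Y]
    (P : X → X) (E : Y → Y) (h : X → Y)
    (hP : Continuous P) (hE : Continuous E) (hh : Continuous h)
    (hsurj : Function.Surjective h) (hconj : h ∘ P = E ∘ h)
    (ν : Measure Y) (hνprob : IsProbabilityMeasure ν)
    (hνinv : Measure.map E ν = ν)
    (hνunique : ∀ ν' : Measure Y, IsProbabilityMeasure ν' → Measure.map E ν' = ν' → ν' = ν)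
    (hνatom : ∀ y : Y, ν {y} = 0)
    (I : ℕ → Set X)
    (hclosed : ∀ n, IsClosed (I n))
    (hdisj : Pairwise (Function.onFun Disjoint I))
    (hpoint : ∀ n, ∃ y : Y, h '' I n = {y})
    (hinj : Set.InjOn h (⋃ n, I n)ᶜ) :
    ∀ μ₁ μ₂ : Measure X, IsProbabilityMeasure μ₁ → IsProbabilityMeasure μ₂ →
      Measure.map P μ₁ = μ₁ → Measure.map P μ₂ = μ₂ → μ₁ = μ₂ :=
  unique_ergodicity_lifts_through_semiconjugacy_general P E h hP hE hh hconj ν hνunique hνatom I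
    hclosed hpoint hinj
end

section
/- Fix k ≥ 1 and let φ : ℝᵏ → ℝ be a continuous function with |φ(x)| ≤ 1 for all x, such that φ(x) = 1 whenever ‖x‖ ∈ (10^{2n−1}+1, 10^{2n}−1) for some integer n ≥ 1, and φ(x) = −1 whenever ‖x‖ ∈ (10^{2n}+1, 10^{2n+1}−1) for some integer n ≥ 1, where ‖·‖ is the Euclidean norm. Then the averages (1/vol(B_r)) ∫_{B_r} φ(y) dy over Euclidean balls B_r of radius r centred at the origin do not converge as r → ∞; i.e. there is no c ∈ ℝ such that (1/vol(B_r)) ∫_{B_r} φ → c. (Example 3.1: the trivial foliation of ℝᵏ × ℝ^{m−k} by the leaves ℝᵏ × {t} admits a continuous function whose length average exists at no point.) -/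
/-!
If `φ = 1` on the annulus `s < ‖x‖ < r` with `4 s ≤ r`, then on `B_r` the function `φ`
differs from `1` only on `B_s`, where `φ ≥ -1`; since `vol B_s / vol B_r = (s / r)^k ≤ 1/4`,
the average of `φ` over `B_r` is at least `1 - 2 (s / r)^k ≥ 1/2`. Along the radii
`10^{2n} - 1` the averages are therefore `≥ 1/2`, and along `10^{2n+1} - 1` they are `≤ -1/2`.
-/

open Filter Topology MeasureTheory Metric

theorem setIntegral_ball_ge_of_eq_one_on_annulus {E : Type*} [NormedAddCommGroup E]
    [ProperSpace E] [MeasurableSpace E] [OpensMeasurableSpace E] (μ : Measure E)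
    [IsFiniteMeasureOnCompacts μ] {φ : E → ℝ} (hφ : AEStronglyMeasurable φ μ)
    (hbd : ∀ x, |φ x| ≤ 1) {s r : ℝ}
    (hone : ∀ x, s < ‖x‖ → ‖x‖ < r → φ x = 1) :
    μ.real (ball 0 r) - 2 * μ.real (closedBall 0 s) ≤ ∫ y in ball 0 r, φ y ∂μ := by
  set C := closedBall (0 : E) s
  have hB : μ (ball (0 : E) r) ≠ ⊤ := measure_ball_lt_top.ne
  have hC : MeasurableSet C := measurableSet_closedBall
  have hlower : ∀ x ∈ ball (0 : E) r, 1 - 2 * C.indicator 1 x ≤ φ x := by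
    intro x hx
    by_cases hxs : x ∈ C
    · simp only [Set.indicator_of_mem hxs, Pi.one_apply]
      linarith [(abs_le.1 (hbd x)).1]
    · rw [mem_ball_zero_iff] at hx
      rw [mem_closedBall_zero_iff, not_le] at hxs
      simp [hone x hxs hx, C, hxs.not_ge]
  have hconst : IntegrableOn (fun _ => (1 : ℝ)) (ball 0 r) μ := integrableOn_const hB
  have hind : IntegrableOn (C.indicator 1) (ball 0 r) μ :=
    (integrable_indicator_iff hC).2 (Integrable.integrableOn hconst)
  calc μ.real (ball 0 r) - 2 * μ.real C
      ≤ μ.real (ball 0 r) - 2 * μ.real (C ∩ ball 0 r) := by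
        gcongr
        · exact measure_closedBall_lt_top.ne
        · exact Set.inter_subset_left
    _ = ∫ y in ball 0 r, 1 - 2 * C.indicator 1 y ∂μ := by
        rw [integral_sub hconst (hind.const_mul 2), integral_const_mul,
          integral_indicator_one hC, measureReal_restrict_apply hC, setIntegral_const, smul_eq_mul,
          mul_one]
    _ ≤ ∫ y in ball 0 r, φ y ∂μ :=
        setIntegral_mono_on (hconst.sub (hind.const_mul 2))
          (Measure.integrableOn_of_bounded hB hφ (M := 1) (ae_of_all _ hbd)) measurableSet_ball
          hlower

section AddHaar

variable {E : Type*} [NormedAddCommGroup E] [NormedSpace ℝ E] [MeasurableSpace E] [BorelSpace E]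
  [FiniteDimensional ℝ E] [Nontrivial E] (μ : Measure E) [μ.IsAddHaarMeasure] {φ : E → ℝ}
  {s r : ℝ}

theorem one_half_le_setAverage_ball_of_eq_one_on_annulus (hφ : AEStronglyMeasurable φ μ)
    (hbd : ∀ x, |φ x| ≤ 1) (hs : 0 < s) (hsr : 4 * s ≤ r)
    (hone : ∀ x, s < ‖x‖ → ‖x‖ < r → φ x = 1) :
    1 / 2 ≤ ⨍ y in ball 0 r, φ y ∂μ := by
  set d := Module.finrank ℝ E
  have hr : 0 < r := by linarith
  have hunit : 0 < μ.real (ball (0 : E) 1) :=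
    ENNReal.toReal_pos (measure_ball_pos μ 0 one_pos).ne' measure_ball_lt_top.ne
  have hball : μ.real (ball (0 : E) r) = r ^ d * μ.real (ball 0 1) := by
    rw [← Measure.addHaar_real_closedBall_eq_addHaar_real_ball,
      Measure.addHaar_real_closedBall μ 0 hr.le]
  have hpow : s ^ d ≤ r ^ d / 4 := by
    have hquarter : s / r ≤ 1 / 4 := by rw [div_le_iff₀ hr]; linarith
    have hratio : (s / r) ^ d ≤ 1 / 4 :=
      (pow_le_of_le_one (by positivity) (by linarith) Module.finrank_pos.ne').trans hquarter
    rw [div_pow, div_le_iff₀ (by positivity)] at hratio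
    linarith
  have hint := setIntegral_ball_ge_of_eq_one_on_annulus μ hφ hbd hone
  rw [hball, Measure.addHaar_real_closedBall μ 0 hs.le] at hint
  rw [setAverage_eq, smul_eq_mul, ← div_eq_inv_mul, hball, le_div_iff₀ (by positivity)]
  linarith [mul_le_mul_of_nonneg_right hpow hunit.le]

theorem setAverage_ball_le_neg_one_half_of_eq_neg_one_on_annulus (hφ : AEStronglyMeasurable φ μ)
    (hbd : ∀ x, |φ x| ≤ 1) (hs : 0 < s) (hsr : 4 * s ≤ r)
    (hneg : ∀ x, s < ‖x‖ → ‖x‖ < r → φ x = -1) :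
    ⨍ y in ball 0 r, φ y ∂μ ≤ -(1 / 2) := by
  have h := one_half_le_setAverage_ball_of_eq_one_on_annulus μ (φ := fun x => -φ x) hφ.neg
    (fun x => by rw [abs_neg]; exact hbd x) hs hsr
    fun x h₁ h₂ => by rw [hneg x h₁ h₂, neg_neg]
  rw [average_neg] at h
  linarith

end AddHaar

theorem four_mul_ten_pow_add_one_le (m : ℕ) :
    4 * ((10 : ℝ) ^ (m + 1) + 1) ≤ 10 ^ (m + 2) - 1 := by
  have : (1 : ℝ) ≤ 10 ^ (m + 1) := one_le_pow₀ (by norm_num)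
  rw [pow_succ _ (m + 1)]
  linarith

theorem tendsto_ten_pow_add_two_sub_one :
    Tendsto (fun m : ℕ => (10 : ℝ) ^ (m + 2) - 1) atTop atTop :=
  tendsto_atTop_add_const_right _ _ <|
    (tendsto_pow_atTop_atTop_of_one_lt (by norm_num)).comp (tendsto_add_atTop_nat 2)

/-- Example 3.1: a bounded continuous function on ℝᵏ which is 1 on the annuli
`10^{2n-1}+1 < ‖x‖ < 10^{2n}-1` and -1 on the annuli `10^{2n}+1 < ‖x‖ < 10^{2n+1}-1`
has no limit of ball averages as the radius tends to infinity. -/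
theorem ball_averages_do_not_converge
    (k : ℕ) (hk : 1 ≤ k)
    (φ : EuclideanSpace ℝ (Fin k) → ℝ) (hφ : Continuous φ)
    (hbd : ∀ x, |φ x| ≤ 1)
    (hpos : ∀ x : EuclideanSpace ℝ (Fin k),
      (∃ n : ℕ, 1 ≤ n ∧ (10:ℝ)^(2*n-1) + 1 < ‖x‖ ∧ ‖x‖ < (10:ℝ)^(2*n) - 1) → φ x = 1)
    (hneg : ∀ x : EuclideanSpace ℝ (Fin k),
      (∃ n : ℕ, 1 ≤ n ∧ (10:ℝ)^(2*n) + 1 < ‖x‖ ∧ ‖x‖ < (10:ℝ)^(2*n+1) - 1) → φ x = -1) :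
    ¬ ∃ c : ℝ, Tendsto
      (fun r : ℝ => (∫ y in Metric.ball (0 : EuclideanSpace ℝ (Fin k)) r, φ y) /
        (volume (Metric.ball (0 : EuclideanSpace ℝ (Fin k)) r)).toReal)
      atTop (𝓝 c) := by
  rintro ⟨c, hc⟩
  have : Nonempty (Fin k) := ⟨⟨0, hk⟩⟩
  simp_rw [div_eq_inv_mul, ← smul_eq_mul, ← measureReal_def, ← setAverage_eq] at hc
  have hc_ge : 1 / 2 ≤ c := by
    refine ge_of_tendsto' (hc.comp (tendsto_ten_pow_add_two_sub_one.comp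
      (tendsto_atTop_mono (fun n => (by omega : n ≤ 2 * n)) tendsto_id))) fun n => ?_
    refine one_half_le_setAverage_ball_of_eq_one_on_annulus _ hφ.aestronglyMeasurable hbd
      (by positivity) (four_mul_ten_pow_add_one_le _) fun x h₁ h₂ =>
        hpos x ⟨n + 1, by omega, ?_, ?_⟩
    · rwa [show 2 * (n + 1) - 1 = 2 * n + 1 by omega]
    · rwa [show 2 * (n + 1) = 2 * n + 2 by ring]
  have hc_le : c ≤ -(1 / 2) := by
    refine le_of_tendsto' (hc.comp (tendsto_ten_pow_add_two_sub_one.comp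
      (tendsto_atTop_mono (fun n => (by omega : n ≤ 2 * n + 1)) tendsto_id))) fun n => ?_
    refine setAverage_ball_le_neg_one_half_of_eq_neg_one_on_annulus _ hφ.aestronglyMeasurable hbd
      (by positivity) (four_mul_ten_pow_add_one_le _) fun x h₁ h₂ =>
        hneg x ⟨n + 1, by omega, ?_, ?_⟩
    · rwa [show 2 * (n + 1) = 2 * n + 1 + 1 by ring]
    · rwa [show 2 * (n + 1) + 1 = 2 * n + 1 + 2 by ring]
  linarith
end

section
/- Let X be a topological space, P : X → X a bijection, x ∈ X, and p̂ ∈ X such that P^{−n}(x) → p̂ as n → ∞. Let φ : X → ℝ be a continuous function such that the forward Birkhoff averages (1/N) ∑_{j=0}^{N−1} φ(P^j x) do not converge as N → ∞. Then the symmetric two-sided Birkhoff averages (1/(2N)) ∑_{j=−N}^{N−1} φ(P^j x) also do not converge as N → ∞. (Example 3.4: the suspension of a diffeomorphism P possessing points without time averages, and whose backward orbits converge to a source, yields a codimension-two regular foliation of a compact manifold without length averages.) -/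
/-!
Split the symmetric sum into its backward half `∑_{i<N} φ(P^{-(i+1)} x)` and its forward half.
Since `P^{-n} x → p̂` and `φ` is continuous, the backward values tend to `φ p̂`, so by Cesàro
the backward averages converge to `φ p̂`. Hence if the two-sided averages converged to `c`, the
forward averages would converge to `2c - φ p̂`.
-/

open Filter Topology

theorem sum_Icc_neg_sub_one_eq_sum_range_add_sum_range {M : Type*} [AddCommMonoid M]
    (f : ℤ → M) (N : ℕ) :
    ∑ j ∈ Finset.Icc (-(N : ℤ)) ((N : ℤ) - 1), f j
      = ∑ i ∈ Finset.range N, f (-((i + 1 : ℕ) : ℤ)) + ∑ i ∈ Finset.range N, f i := by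
  induction N with
  | zero => simp
  | succ N ih =>
    have hIcc : Finset.Icc (-((N + 1 : ℕ) : ℤ)) (((N + 1 : ℕ) : ℤ) - 1)
        = insert (-((N + 1 : ℕ) : ℤ)) (insert (N : ℤ) (Finset.Icc (-(N : ℤ)) ((N : ℤ) - 1))) := by
      ext j
      simp only [Finset.mem_insert, Finset.mem_Icc]
      omega
    rw [hIcc, Finset.sum_insert (by simp only [Finset.mem_insert, Finset.mem_Icc]; omega),
      Finset.sum_insert (by simp), ih, Finset.sum_range_succ, Finset.sum_range_succ]
    abel

theorem tendsto_div_of_tendsto_add_div_two_mul {A B : ℕ → ℝ} {c l : ℝ}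
    (hAB : Tendsto (fun N : ℕ => (A N + B N) / (2 * N)) atTop (𝓝 c))
    (hA : Tendsto (fun N : ℕ => A N / N) atTop (𝓝 l)) :
    Tendsto (fun N : ℕ => B N / N) atTop (𝓝 (2 * c - l)) := by
  refine ((hAB.const_mul 2).sub hA).congr' ?_
  filter_upwards [eventually_ne_atTop 0] with N hN
  have hN' : (N : ℝ) ≠ 0 := Nat.cast_ne_zero.mpr hN
  field_simp
  ring

/-- Example 3.4: if the backward orbit of `x` under a bijection `P` converges to `phat` and
the forward Birkhoff averages of a continuous `φ` at `x` do not converge, then the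
symmetric two-sided Birkhoff averages do not converge either. -/
theorem two_sided_birkhoff_average_does_not_exist
    {X : Type*} [TopologicalSpace X] (P : Equiv.Perm X) (x phat : X)
    (hback : Tendsto (fun n : ℕ => (P ^ (-(n : ℤ))) x) atTop (𝓝 phat))
    (φ : X → ℝ) (hφ : Continuous φ)
    (hfwd : ¬ ∃ A : ℝ, Tendsto (fun N : ℕ => (∑ j ∈ Finset.range N, φ ((P ^ j) x)) / N)
      atTop (𝓝 A)) :
    ¬ ∃ c : ℝ, Tendsto
      (fun N : ℕ => (∑ j ∈ Finset.Icc (-(N : ℤ)) ((N : ℤ) - 1), φ ((P ^ j) x)) / (2 * N))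
      atTop (𝓝 c) := by
  rintro ⟨c, hc⟩
  have hbackφ : Tendsto (fun i : ℕ => φ ((P ^ (-((i + 1 : ℕ) : ℤ))) x)) atTop (𝓝 (φ phat)) :=
    (hφ.tendsto phat).comp (hback.comp (tendsto_add_atTop_nat 1))
  have hbackAvg : Tendsto (fun N : ℕ => (∑ i ∈ Finset.range N,
      φ ((P ^ (-((i + 1 : ℕ) : ℤ))) x)) / N) atTop (𝓝 (φ phat)) := by
    simpa only [div_eq_inv_mul] using hbackφ.cesaro
  simp only [sum_Icc_neg_sub_one_eq_sum_range_add_sum_range, zpow_natCast] at hc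
  exact hfwd ⟨_, tendsto_div_of_tendsto_add_div_two_mul hc hbackAvg⟩
end
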